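/- arXiv:1412.6595 — 5 statements merged into one kernel-verified Lean document; each statement's English description precedes it below -/
import Mathlib

section
/- For the path graph with a leader set S = {ℓ_1 < ... < ℓ_k}, the total steady-state variance satisfies R(S) = (1/2)tr(L_{(0,ℓ_1)}^{-1}) + (1/2)Σ_{i=1}^{k-1} tr(L_{(ℓ_i,ℓ_{i+1})}^{-1}) + (1/2)tr(L_{(ℓ_k,n+1)}^{-1}), where L_{(a,b)} denotes the principal submatrix of L indexed by {a+1,...,b-1}, and the trace of the inverse of a 0×0 matrix is 0. -/
/-!
Removing the leaders cuts the path into the intervals between consecutive leaders, and no edge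
joins two different intervals. Reordering the followers interval by interval therefore turns
`L_ff` into a block-diagonal matrix whose blocks are the interval submatrices, and the inverse of
a block-diagonal matrix with invertible blocks is taken block by block.

Each block is invertible because it is positive definite: `L = Bᵀ diag(w) B` for the signed
edge-vertex incidence matrix `B` of the path, and `B` stays injective on vectors supported away
from a leader, since `B y = 0` forces `y` to be constant along the path.
-/

/-- Weighted Laplacian of the path graph on `Fin n` where `w i` is the weight of
edge `(i, i+1)`. -/
def pathLaplacian (n : ℕ) (w : ℕ → ℝ) : Matrix (Fin n) (Fin n) ℝ :=
  Matrix.of fun i j =>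
    if i = j then (if i.1 + 1 < n then w i.1 else 0) + (if i.1 = 0 then 0 else w (i.1 - 1))
    else if j.1 = i.1 + 1 then -(w i.1)
    else if i.1 = j.1 + 1 then -(w j.1) else 0

/-- Lower index (inclusive, 0-based) of the `i`-th inter-leader interval. -/
def blockLo {n k : ℕ} (ℓ : Fin k → Fin n) (i : Fin (k + 1)) : ℕ :=
  if h : i.1 = 0 then 0 else (ℓ ⟨i.1 - 1, by have := i.2; omega⟩).1 + 1

/-- Upper index (exclusive, 0-based) of the `i`-th inter-leader interval. -/
def blockHi {n k : ℕ} (ℓ : Fin k → Fin n) (i : Fin (k + 1)) : ℕ :=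
  if h : i.1 < k then (ℓ ⟨i.1, h⟩).1 else n

open Matrix Finset Function

namespace Matrix

variable {ι m n R : Type*}

theorem trace_submatrix_equiv [Fintype m] [Fintype n] [AddCommMonoid R]
    (A : Matrix n n R) (e : m ≃ n) : (A.submatrix e e).trace = A.trace :=
  e.sum_comp fun i => A i i

theorem inv_blockDiagonal' [Fintype ι] [DecidableEq ι] [CommRing R]
    {β : ι → Type*} [∀ i, Fintype (β i)] [∀ i, DecidableEq (β i)]
    {D : ∀ i, Matrix (β i) (β i) R} (hD : ∀ i, IsUnit (D i)) :
    (blockDiagonal' D)⁻¹ = blockDiagonal' fun i => (D i)⁻¹ := by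
  refine inv_eq_right_inv ?_
  rw [← blockDiagonal'_mul, ← blockDiagonal'_one]
  congr 1
  funext i
  exact mul_nonsing_inv _ ((isUnit_iff_isUnit_det _).mp (hD i))

theorem submatrix_id_mulVec_eq_mulVec_extend [Fintype n] [Fintype ι]
    [NonUnitalNonAssocSemiring R]
    (B : Matrix m n R) {f : ι → n} (hf : Injective f) (x : ι → R) :
    B.submatrix id f *ᵥ x = B *ᵥ extend f x 0 := by
  classical
  ext e
  simp only [mulVec, dotProduct, submatrix_apply, id]
  rw [← sum_subset (subset_univ (univ.image f)), sum_image fun a _ b _ h => hf h]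
  · simp only [hf.extend_apply]
  · intro p _ hp
    rw [extend_apply' _ _ _ (by simpa using hp), Pi.zero_apply, mul_zero]

end Matrix

section PathLaplacian

variable {n : ℕ}

def pathIncidence (n : ℕ) : Matrix (Fin (n - 1)) (Fin n) ℝ :=
  of fun e => Pi.single ⟨e, by omega⟩ 1 - Pi.single ⟨e + 1, by omega⟩ 1

theorem pathLaplacian_eq_transpose_mul_diagonal_mul (w : ℕ → ℝ) :
    pathLaplacian n w =
      (pathIncidence n)ᵀ * diagonal (fun e : Fin (n - 1) => w e) * pathIncidence n := by
  ext p q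
  rw [mul_apply]
  simp only [mul_diagonal, transpose_apply, pathIncidence, of_apply, Pi.sub_apply,
    Pi.single_apply, Fin.ext_iff]
  rw [Fin.sum_univ_eq_sum_range (fun i =>
    ((if p.1 = i then 1 else 0) - (if p.1 = i + 1 then 1 else 0)) * w i *
      ((if q.1 = i then 1 else 0) - (if q.1 = i + 1 then 1 else 0)))]
  have hq (x : ℕ) : q.1 = x + 1 ↔ 0 < q.1 ∧ q.1 - 1 = x := by omega
  simp only [pathLaplacian, of_apply, Fin.ext_iff, sub_mul, mul_sub, ite_mul, mul_ite, one_mul,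
    mul_one, zero_mul, mul_zero, sum_sub_distrib, hq, ite_and, sum_ite_irrel, sum_ite_eq,
    mem_range, sum_const_zero]
  grind

theorem pathLaplacian_apply_eq_zero (w : ℕ → ℝ) {p q : Fin n}
    (h : p.1 + 1 < q.1 ∨ q.1 + 1 < p.1) : pathLaplacian n w p q = 0 := by
  simp only [pathLaplacian, of_apply, Fin.ext_iff]
  rw [if_neg (by omega), if_neg (by omega), if_neg (by omega)]

theorem pathIncidence_mulVec_apply (y : Fin n → ℝ) (e : Fin (n - 1)) :
    (pathIncidence n *ᵥ y) e = y ⟨e, by omega⟩ - y ⟨e + 1, by omega⟩ := by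
  change (Pi.single _ 1 - Pi.single _ 1) ⬝ᵥ y = _
  rw [sub_dotProduct, single_dotProduct, single_dotProduct, one_mul, one_mul]

theorem eq_of_pathIncidence_mulVec_eq_zero {y : Fin n → ℝ} (hy : pathIncidence n *ᵥ y = 0)
    (p q : Fin n) : y p = y q := by
  suffices h : ∀ (m : ℕ) (hm : m < n), y ⟨m, hm⟩ = y ⟨0, by omega⟩ by
    rw [h p p.2, h q q.2]
  intro m hm
  induction m with
  | zero => rfl
  | succ m ih =>
    have hedge := congrFun hy ⟨m, by omega⟩
    rw [pathIncidence_mulVec_apply, Pi.zero_apply, sub_eq_zero] at hedge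
    rw [← ih (by omega), hedge]

theorem pathIncidence_submatrix_mulVec_injective {ι : Type*} [Fintype ι] {f : ι → Fin n}
    (hf : Injective f) {v₀ : Fin n} (hv₀ : v₀ ∉ Set.range f) :
    Injective ((pathIncidence n).submatrix id f).mulVec := by
  suffices h : ∀ x, (pathIncidence n).submatrix id f *ᵥ x = 0 → x = 0 by
    intro x x' hxx'
    rw [← sub_eq_zero]
    exact h _ (by rw [mulVec_sub, hxx', sub_self])
  intro x hx
  rw [submatrix_id_mulVec_eq_mulVec_extend _ hf] at hx
  ext a
  rw [Pi.zero_apply, ← hf.extend_apply x 0, eq_of_pathIncidence_mulVec_eq_zero hx (f a) v₀,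
    extend_apply' _ _ _ (by simpa using hv₀), Pi.zero_apply]

theorem posDef_pathLaplacian_submatrix {w : ℕ → ℝ} (hw : ∀ i, i + 1 < n → 0 < w i)
    {ι : Type*} [Fintype ι] {f : ι → Fin n} (hf : Injective f) {v₀ : Fin n}
    (hv₀ : v₀ ∉ Set.range f) : ((pathLaplacian n w).submatrix f f).PosDef := by
  have hW : (diagonal fun e : Fin (n - 1) => w e).PosDef :=
    PosDef.diagonal fun e => hw e (by omega)
  rw [pathLaplacian_eq_transpose_mul_diagonal_mul, submatrix_mul _ _ _ id _ bijective_id,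
    submatrix_mul _ _ _ id _ bijective_id, submatrix_id_id, ← transpose_submatrix,
    ← conjTranspose_eq_transpose_of_trivial]
  exact hW.conjTranspose_mul_mul_same (pathIncidence_submatrix_mulVec_injective hf hv₀)

end PathLaplacian

section Blocks

variable {n k : ℕ} {ℓ : Fin k → Fin n}

theorem blockLo_succ (j : Fin k) : blockLo ℓ j.succ = ℓ j + 1 := rfl

theorem blockHi_castSucc (j : Fin k) : blockHi ℓ j.castSucc = ℓ j := by
  simp [blockHi]

@[simp] theorem blockHi_last : blockHi ℓ (Fin.last k) = n := by
  simp [blockHi]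

theorem lt_blockLo (hℓ : StrictMono ℓ) {i : Fin (k + 1)} {j : Fin k} (hj : j.castSucc < i) :
    (ℓ j).1 < blockLo ℓ i := by
  cases i using Fin.cases with
  | zero => exact absurd hj (Fin.not_lt_zero _)
  | succ i =>
    rw [blockLo_succ, Nat.lt_add_one_iff, ← Fin.le_def]
    exact hℓ.monotone (Fin.castSucc_lt_succ_iff.mp hj)

theorem blockHi_le (hℓ : StrictMono ℓ) {i : Fin (k + 1)} {j : Fin k} (hj : i ≤ j.castSucc) :
    blockHi ℓ i ≤ ℓ j := by
  cases i using Fin.lastCases with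
  | last => exact absurd hj (not_le.mpr (Fin.castSucc_lt_last j))
  | cast i =>
    rw [blockHi_castSucc, ← Fin.le_def]
    exact hℓ.monotone (Fin.castSucc_le_castSucc_iff.mp hj)

/-- The leader `ℓ i` separates the `i`-th interval from every later one. -/
theorem add_one_lt_of_lt_blockHi_of_blockLo_le (hℓ : StrictMono ℓ) {i i' : Fin (k + 1)}
    (hii' : i < i') {v u : Fin n} (hv : v.1 < blockHi ℓ i) (hu : blockLo ℓ i' ≤ u.1) :
    v.1 + 1 < u.1 := by
  have hik : i.1 < k := by omega
  have hhi := blockHi_le hℓ (i := i) (j := ⟨i, hik⟩) (Fin.le_def.mpr le_rfl)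
  have hlo := lt_blockLo hℓ (i := i') (j := ⟨i, hik⟩) hii'
  omega

theorem notMem_image_of_blockLo_le_of_lt_blockHi (hℓ : StrictMono ℓ) {i : Fin (k + 1)}
    {v : Fin n} (hv : blockLo ℓ i ≤ v.1 ∧ v.1 < blockHi ℓ i) : v ∉ univ.image ℓ := by
  rw [mem_image]
  rintro ⟨j, -, rfl⟩
  rcases lt_or_ge j.castSucc i with hj | hj
  · exact absurd hv.1 (not_le.mpr (lt_blockLo hℓ hj))
  · exact absurd hv.2 (not_lt.mpr (blockHi_le hℓ hj))

theorem exists_blockLo_le_and_lt_blockHi {v : Fin n} (hv : v ∉ univ.image ℓ) :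
    ∃ i : Fin (k + 1), blockLo ℓ i ≤ v.1 ∧ v.1 < blockHi ℓ i := by
  obtain ⟨i, hi, hmin⟩ := (univ.filter fun i : Fin (k + 1) => v.1 < blockHi ℓ i).exists_min_image
    id ⟨Fin.last k, by simp⟩
  refine ⟨i, ?_, (mem_filter.mp hi).2⟩
  cases i using Fin.cases with
  | zero => exact Nat.zero_le _
  | succ j =>
    have hle : ℓ j ≤ v := by
      by_contra hlt
      have := hmin j.castSucc (by simpa [blockHi_castSucc] using not_le.mp hlt)
      exact absurd this (not_le.mpr Fin.castSucc_lt_succ)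
    have hne : ℓ j ≠ v := fun h => hv (mem_image.mpr ⟨j, mem_univ _, h⟩)
    rw [blockLo_succ]
    exact Fin.lt_def.mp (lt_of_le_of_ne hle hne)

noncomputable def sigmaBlocksEquivFollowers (hℓ : StrictMono ℓ) :
    (Σ i : Fin (k + 1), {v : Fin n // blockLo ℓ i ≤ v.1 ∧ v.1 < blockHi ℓ i}) ≃
      {v : Fin n // v ∉ univ.image ℓ} :=
  Equiv.ofBijective (fun x => ⟨x.2, notMem_image_of_blockLo_le_of_lt_blockHi hℓ x.2.2⟩) <| by
    constructor
    · rintro ⟨i, v, hv⟩ ⟨i', v', hv'⟩ h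
      obtain rfl : v = v' := congrArg Subtype.val h
      obtain rfl : i = i' := by
        by_contra hne
        rcases lt_or_gt_of_ne hne with hlt | hlt
        · have := add_one_lt_of_lt_blockHi_of_blockLo_le hℓ hlt hv.2 hv'.1
          omega
        · have := add_one_lt_of_lt_blockHi_of_blockLo_le hℓ hlt hv'.2 hv.1
          omega
      rfl
    · rintro ⟨v, hv⟩
      obtain ⟨i, hi⟩ := exists_blockLo_le_and_lt_blockHi hv
      exact ⟨⟨i, v, hi⟩, rfl⟩

theorem pathLaplacian_submatrix_sigmaBlocksEquivFollowers (w : ℕ → ℝ) (hℓ : StrictMono ℓ) :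
    ((pathLaplacian n w).submatrix ((↑) : {v : Fin n // v ∉ univ.image ℓ} → Fin n) (↑)).submatrix
        (sigmaBlocksEquivFollowers hℓ) (sigmaBlocksEquivFollowers hℓ) =
      blockDiagonal' fun i => (pathLaplacian n w).submatrix
        ((↑) : {v : Fin n // blockLo ℓ i ≤ v.1 ∧ v.1 < blockHi ℓ i} → Fin n) (↑) := by
  ext ⟨i, v, hv⟩ ⟨i', u, hu⟩
  rcases eq_or_ne i i' with rfl | hne
  · rw [blockDiagonal'_apply_eq]
    rfl
  · rw [blockDiagonal'_apply_ne _ _ _ hne]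
    apply pathLaplacian_apply_eq_zero
    rcases lt_or_gt_of_ne hne with hlt | hlt
    · exact Or.inl (add_one_lt_of_lt_blockHi_of_blockLo_le hℓ hlt hv.2 hu.1)
    · exact Or.inr (add_one_lt_of_lt_blockHi_of_blockLo_le hℓ hlt hu.2 hv.1)

theorem posDef_pathLaplacian_submatrix_block {w : ℕ → ℝ} (hw : ∀ i, i + 1 < n → 0 < w i)
    (hk : 0 < k) (hℓ : StrictMono ℓ) (i : Fin (k + 1)) :
    ((pathLaplacian n w).submatrix
      ((↑) : {v : Fin n // blockLo ℓ i ≤ v.1 ∧ v.1 < blockHi ℓ i} → Fin n) (↑)).PosDef := by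
  refine posDef_pathLaplacian_submatrix hw Subtype.val_injective (v₀ := ℓ ⟨0, hk⟩) ?_
  rintro ⟨⟨v, hv⟩, rfl⟩
  exact notMem_image_of_blockLo_le_of_lt_blockHi hℓ hv (mem_image_of_mem ℓ (mem_univ _))

end Blocks

/-- For a path graph with leader set `{ℓ 0 < ⋯ < ℓ (k-1)}` (`k ≥ 1`), the total
steady-state variance `R(S) = (1/2)tr(L_ff⁻¹)` decomposes as half the sum of the
traces of the inverses of the principal submatrices of `L` indexed by the
intervals between consecutive leaders (0×0 blocks contributing 0). -/
theorem path_variance_decomposition {n k : ℕ} (w : ℕ → ℝ)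
    (hw : ∀ i, i + 1 < n → 0 < w i) (hk : 0 < k)
    (ℓ : Fin k → Fin n) (hmono : StrictMono ℓ) :
    (1 / 2 : ℝ) * Matrix.trace
        (((pathLaplacian n w).submatrix
            (fun a : {v : Fin n // v ∉ Finset.image ℓ Finset.univ} => (a : Fin n))
            (fun a : {v : Fin n // v ∉ Finset.image ℓ Finset.univ} => (a : Fin n)))⁻¹)
      = (1 / 2 : ℝ) * ∑ i : Fin (k + 1),
          Matrix.trace
            (((pathLaplacian n w).submatrix
                (fun a : {v : Fin n // blockLo ℓ i ≤ v.1 ∧ v.1 < blockHi ℓ i} => (a : Fin n))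
                (fun a : {v : Fin n // blockLo ℓ i ≤ v.1 ∧ v.1 < blockHi ℓ i} => (a : Fin n)))⁻¹) := by
  rw [← trace_submatrix_equiv _ (sigmaBlocksEquivFollowers hmono), ← inv_submatrix_equiv,
    pathLaplacian_submatrix_sigmaBlocksEquivFollowers w hmono,
    inv_blockDiagonal' fun i => (posDef_pathLaplacian_submatrix_block hw hk hmono i).isUnit,
    trace_blockDiagonal']
end

section
/- Monotonicity of the leader selection objective: for the grounded Laplacian of a connected weighted graph, if S ⊆ T are nonempty vertex sets, then tr((L_T)^{-1}) ≤ tr((L_S)^{-1}), where L_S denotes L with rows and columns of S removed. -/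
open Matrix Function

/-- Weighted Laplacian of a graph on `Fin n` given by a symmetric weight function. -/
def weightedLaplacian {n : ℕ} (w : Fin n → Fin n → ℝ) : Matrix (Fin n) (Fin n) ℝ :=
  Matrix.of fun i j => if i = j then ∑ k, w i k else -(w i j)

/-!
The quadratic form of `L` is `½ ∑ᵢⱼ wᵢⱼ (xᵢ - xⱼ)²`; on vectors vanishing on a nonempty `S` it
is zero only at `0`, because a vector with zero form is constant along edges, hence constant on
the connected graph. So `L_S` is positive definite, and `L_T` is a principal submatrix of it.
For a positive definite `A` with principal submatrix `B`, every diagonal entry of `B⁻¹` is at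
most the matching one of `A⁻¹`: test the variational bound `2⟨z, x⟩ - ⟨z, A z⟩ ≤ ⟨x, A⁻¹ x⟩`
with `x = eᵢ` and `z` the extension by zero of `B⁻¹ eᵢ`. The diagonal entries of `A⁻¹` outside
`B` are positive, so they only add to `tr A⁻¹`.
-/

namespace Matrix

variable {l m R : Type*} [Fintype l] [Fintype m] [CommSemiring R]

lemma extend_dotProduct {f : l → m} (hf : Injective f) (y : l → R) (v : m → R) :
    extend f y 0 ⬝ᵥ v = y ⬝ᵥ (v ∘ f) :=
  (Fintype.sum_of_injective f hf _ _
    (fun j hj => by simp [extend_apply' _ _ _ (by simpa using hj)])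
    (fun i => by simp [hf.extend_apply])).symm

lemma dotProduct_mulVec_extend (A : Matrix m m R) {f : l → m} (hf : Injective f) (y : l → R) :
    extend f y 0 ⬝ᵥ (A *ᵥ extend f y 0) = y ⬝ᵥ (A.submatrix f f *ᵥ y) := by
  rw [extend_dotProduct hf]
  congr 1
  ext i
  rw [Function.comp_apply, mulVec, dotProduct_comm, extend_dotProduct hf, dotProduct_comm]
  rfl

variable [DecidableEq m] [DecidableEq l]

lemma PosDef.two_mul_dotProduct_sub_le {A : Matrix m m ℝ} (hA : A.PosDef) (x z : m → ℝ) :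
    2 * (z ⬝ᵥ x) - z ⬝ᵥ (A *ᵥ z) ≤ x ⬝ᵥ (A⁻¹ *ᵥ x) := by
  set u := A⁻¹ *ᵥ x
  have hAu : A *ᵥ u = x := by
    rw [mulVec_mulVec, mul_nonsing_inv A ((isUnit_iff_isUnit_det A).mp hA.isUnit), one_mulVec]
  have hsymm : u ⬝ᵥ (A *ᵥ z) = x ⬝ᵥ z := by
    rw [dotProduct_mulVec, ← mulVec_transpose, isHermitian_iff_isSymm.mp hA.isHermitian, hAu]
  have hnonneg : 0 ≤ (z - u) ⬝ᵥ (A *ᵥ (z - u)) := by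
    simpa using hA.posSemidef.dotProduct_mulVec_nonneg (z - u)
  rw [mulVec_sub, hAu, sub_dotProduct, dotProduct_sub, dotProduct_sub, hsymm] at hnonneg
  linarith [dotProduct_comm x z, dotProduct_comm u x]

lemma PosDef.inv_submatrix_apply_self_le {A : Matrix m m ℝ} (hA : A.PosDef) {f : l → m}
    (hf : Injective f) (i : l) : (A.submatrix f f)⁻¹ i i ≤ A⁻¹ (f i) (f i) := by
  set B := A.submatrix f f
  set y := B⁻¹ *ᵥ Pi.single i 1 with hy
  have hBy : B *ᵥ y = Pi.single i 1 := by
    rw [mulVec_mulVec, mul_nonsing_inv B ((isUnit_iff_isUnit_det B).mp (hA.submatrix hf).isUnit),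
      one_mulVec]
  have key := hA.two_mul_dotProduct_sub_le (Pi.single (f i) 1) (extend f y 0)
  rw [dotProduct_mulVec_extend A hf, hBy, dotProduct_single_one, dotProduct_single_one,
    hf.extend_apply, mulVec_single_one, single_one_dotProduct, col_apply] at key
  have hyi : y i = B⁻¹ i i := by rw [hy, mulVec_single_one, col_apply]
  linarith

lemma PosDef.trace_inv_submatrix_le {A : Matrix m m ℝ} (hA : A.PosDef) {f : l → m}
    (hf : Injective f) : (A.submatrix f f)⁻¹.trace ≤ A⁻¹.trace := by
  simp only [trace, diag_apply]
  calc ∑ i, (A.submatrix f f)⁻¹ i i ≤ ∑ i, A⁻¹ (f i) (f i) :=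
        Finset.sum_le_sum fun i _ => hA.inv_submatrix_apply_self_le hf i
    _ = ∑ j ∈ Finset.univ.map ⟨f, hf⟩, A⁻¹ j j := by rw [Finset.sum_map]; rfl
    _ ≤ ∑ j, A⁻¹ j j := Finset.sum_le_univ_sum_of_nonneg fun j => hA.inv.diag_pos.le

end Matrix

lemma SimpleGraph.Preconnected.eq_of_forall_adj {V α : Type*} {G : SimpleGraph V}
    (hG : G.Preconnected) {x : V → α} (hx : ∀ u v, G.Adj u v → x u = x v) (u v : V) :
    x u = x v := by
  obtain ⟨p⟩ := hG u v
  induction p with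
  | nil => rfl
  | cons hadj _ ih => exact (hx _ _ hadj).trans ih

section weightedLaplacian

variable {n : ℕ} {w : Fin n → Fin n → ℝ}

lemma weightedLaplacian_isHermitian (hsym : ∀ i j, w i j = w j i) :
    (weightedLaplacian w).IsHermitian := by
  ext i j
  by_cases h : i = j
  · subst h; simp [weightedLaplacian]
  · simp [weightedLaplacian, h, Ne.symm h, hsym j i]

lemma weightedLaplacian_eq_diagonal_sub (hdiag : ∀ i, w i i = 0) :
    weightedLaplacian w = diagonal (fun i => ∑ j, w i j) - of w := by
  ext i j
  by_cases h : i = j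
  · subst h; simp [weightedLaplacian, hdiag]
  · simp [weightedLaplacian, h]

lemma weightedLaplacian_mulVec_apply (hdiag : ∀ i, w i i = 0) (x : Fin n → ℝ) (i : Fin n) :
    (weightedLaplacian w *ᵥ x) i = ∑ j, w i j * (x i - x j) := by
  simp only [weightedLaplacian_eq_diagonal_sub hdiag, sub_mulVec, Pi.sub_apply, mulVec_diagonal,
    mul_sub, Finset.sum_sub_distrib, Finset.sum_mul]
  rfl

lemma two_mul_dotProduct_weightedLaplacian_mulVec (hsym : ∀ i j, w i j = w j i)
    (hdiag : ∀ i, w i i = 0) (x : Fin n → ℝ) :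
    2 * (x ⬝ᵥ (weightedLaplacian w *ᵥ x)) = ∑ i, ∑ j, w i j * (x i - x j) ^ 2 := by
  have hform : x ⬝ᵥ (weightedLaplacian w *ᵥ x) = ∑ i, ∑ j, w i j * x i * (x i - x j) := by
    simp only [dotProduct, weightedLaplacian_mulVec_apply hdiag, Finset.mul_sum]
    exact Fintype.sum_congr _ _ fun i => Fintype.sum_congr _ _ fun j => by ring
  have hswap : ∑ i, ∑ j, w i j * x i * (x i - x j) = ∑ i, ∑ j, w i j * x j * (x j - x i) := by
    rw [Finset.sum_comm]
    simp only [hsym]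
  rw [two_mul, hform]
  nth_rw 2 [hswap]
  rw [← Finset.sum_add_distrib]
  refine Finset.sum_congr rfl fun i _ => ?_
  rw [← Finset.sum_add_distrib]
  exact Finset.sum_congr rfl fun j _ => by ring

variable (hsym : ∀ i j, w i j = w j i) (hdiag : ∀ i, w i i = 0) (hnonneg : ∀ i j, 0 ≤ w i j)
include hsym hdiag hnonneg

lemma posSemidef_weightedLaplacian : (weightedLaplacian w).PosSemidef := by
  refine PosSemidef.of_dotProduct_mulVec_nonneg (weightedLaplacian_isHermitian hsym) fun x => ?_
  have hsum : 0 ≤ ∑ i, ∑ j, w i j * (x i - x j) ^ 2 :=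
    Finset.sum_nonneg fun i _ => Finset.sum_nonneg fun j _ => mul_nonneg (hnonneg i j) (sq_nonneg _)
  rw [star_trivial]
  linarith [two_mul_dotProduct_weightedLaplacian_mulVec hsym hdiag x]

lemma eq_of_dotProduct_weightedLaplacian_mulVec_eq_zero {x : Fin n → ℝ}
    (hx : x ⬝ᵥ (weightedLaplacian w *ᵥ x) = 0) {i j : Fin n} (hij : 0 < w i j) : x i = x j := by
  have hnn : ∀ i j, 0 ≤ w i j * (x i - x j) ^ 2 := fun i j =>
    mul_nonneg (hnonneg i j) (sq_nonneg _)
  have hsum : ∑ i, ∑ j, w i j * (x i - x j) ^ 2 = 0 := by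
    rw [← two_mul_dotProduct_weightedLaplacian_mulVec hsym hdiag, hx, mul_zero]
  have hrow := (Finset.sum_eq_zero_iff_of_nonneg fun i _ => Finset.sum_nonneg fun j _ =>
    hnn i j).mp hsum i (Finset.mem_univ i)
  have hterm := (Finset.sum_eq_zero_iff_of_nonneg fun j _ => hnn i j).mp hrow j (Finset.mem_univ j)
  have hsq := (mul_eq_zero.mp hterm).resolve_left hij.ne'
  exact sub_eq_zero.mp (pow_eq_zero_iff two_ne_zero |>.mp hsq)

lemma posDef_weightedLaplacian_submatrix
    (hconn : (SimpleGraph.fromRel (fun i j => 0 < w i j)).Connected)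
    {S : Finset (Fin n)} (hS : S.Nonempty) :
    ((weightedLaplacian w).submatrix (fun i : {v : Fin n // v ∉ S} => (i : Fin n))
      (fun i : {v : Fin n // v ∉ S} => (i : Fin n))).PosDef := by
  have hL := posSemidef_weightedLaplacian hsym hdiag hnonneg
  refine PosDef.of_dotProduct_mulVec_pos (hL.submatrix _).isHermitian fun y hy => ?_
  rw [star_trivial, ← dotProduct_mulVec_extend _ Subtype.val_injective]
  set x := extend Subtype.val y 0
  refine (hL.dotProduct_mulVec_nonneg x).lt_of_ne' fun hx => hy ?_
  have hconst : ∀ u v, x u = x v := hconn.preconnected.eq_of_forall_adj fun u v huv => by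
    rcases ((SimpleGraph.fromRel_adj _ u v).mp huv).2 with h | h
    · exact eq_of_dotProduct_weightedLaplacian_mulVec_eq_zero hsym hdiag hnonneg hx h
    · exact (eq_of_dotProduct_weightedLaplacian_mulVec_eq_zero hsym hdiag hnonneg hx h).symm
  obtain ⟨s, hs⟩ := hS
  have hxs : x s = 0 := extend_apply' _ _ _ fun ⟨k, hk⟩ => k.2 (hk ▸ hs)
  ext k
  exact (Subtype.val_injective.extend_apply y 0 k).symm.trans ((hconst _ s).trans hxs)

end weightedLaplacian

/-- Monotonicity of the leader-selection objective: enlarging the leader set can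
only decrease the trace of the inverse grounded Laplacian. -/
theorem trace_inv_grounded_antitone {n : ℕ} (w : Fin n → Fin n → ℝ)
    (hsym : ∀ i j, w i j = w j i) (hdiag : ∀ i, w i i = 0)
    (hnonneg : ∀ i j, 0 ≤ w i j)
    (hconn : (SimpleGraph.fromRel (fun i j => 0 < w i j)).Connected)
    (S T : Finset (Fin n)) (hS : S.Nonempty) (hST : S ⊆ T) :
    Matrix.trace
        (((weightedLaplacian w).submatrix
            (fun i : {v : Fin n // v ∉ T} => (i : Fin n))
            (fun j : {v : Fin n // v ∉ T} => (j : Fin n)))⁻¹)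
      ≤ Matrix.trace
        (((weightedLaplacian w).submatrix
            (fun i : {v : Fin n // v ∉ S} => (i : Fin n))
            (fun j : {v : Fin n // v ∉ S} => (j : Fin n)))⁻¹) := by
  let incl : {v : Fin n // v ∉ T} → {v : Fin n // v ∉ S} := fun v => ⟨v, fun h => v.2 (hST h)⟩
  have hincl : Injective incl := fun u v huv => Subtype.ext (congrArg Subtype.val huv :)
  have h := (posDef_weightedLaplacian_submatrix hsym hdiag hnonneg hconn hS).trace_inv_submatrix_le
    hincl
  rwa [submatrix_submatrix] at h
end

section
/- In the digraph constructed for path-graph leader selection, leader sets of size exactly k containing vertices ℓ_1 < ... < ℓ_k are in bijection with directed paths of exactly k+1 edges from s to t, namely s → ℓ_1 → ℓ_2 → ... → ℓ_k → t; moreover the weight of the path equals twice R({ℓ_1,...,ℓ_k}). -/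
/-- `trInv L P` is the trace of the inverse of the principal submatrix of `L` on
the index set `{v | P v}` (equal to `0` for an empty index set). -/
noncomputable def trInv {n : ℕ} (L : Matrix (Fin n) (Fin n) ℝ) (P : Fin n → Prop) : ℝ :=
  haveI : DecidablePred P := fun v => Classical.propDecidable _
  Matrix.trace
    ((L.submatrix (fun a : {v : Fin n // P v} => (a : Fin n))
        (fun a : {v : Fin n // P v} => (a : Fin n)))⁻¹)

/-- Edge relation of the auxiliary digraph: `inr false` is the source `s`,
`inr true` is the target `t`, and `inl v` is vertex `v` of the path graph. -/
def auxEdge {n : ℕ} : (Fin n ⊕ Bool) → (Fin n ⊕ Bool) → Prop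
  | Sum.inr false, Sum.inl _ => True
  | Sum.inl u, Sum.inl v => u < v
  | Sum.inl _, Sum.inr true => True
  | _, _ => False

/-- Edge weights of the auxiliary digraph built from the path Laplacian `L`. -/
noncomputable def auxWeight {n : ℕ} (L : Matrix (Fin n) (Fin n) ℝ) :
    (Fin n ⊕ Bool) → (Fin n ⊕ Bool) → ℝ
  | Sum.inr false, Sum.inl v => trInv L (fun x => x < v)
  | Sum.inl u, Sum.inl v => trInv L (fun x => u < x ∧ x < v)
  | Sum.inl v, Sum.inr true => trInv L (fun x => v < x)
  | _, _ => 0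

/-- The path `s → ℓ 0 → ℓ 1 → ⋯ → ℓ (k-1) → t` in the auxiliary digraph. -/
def leaderPath {n k : ℕ} (ℓ : Fin k → Fin n) : Fin (k + 2) → Fin n ⊕ Bool :=
  fun i =>
    if h0 : i.1 = 0 then Sum.inr false
    else if h : i.1 ≤ k then Sum.inl (ℓ ⟨i.1 - 1, by omega⟩)
    else Sum.inr true

open Matrix

theorem pathLaplacian_isSymm (n : ℕ) (w : ℕ → ℝ) : (pathLaplacian n w).IsSymm :=
  IsSymm.ext fun i j => by
    simp only [pathLaplacian, of_apply, Fin.ext_iff]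
    split_ifs <;> first | rfl | omega | simp_all

theorem pathLaplacian_apply_eq_zero_s9 {n : ℕ} (w : ℕ → ℝ) {u v : Fin n}
    (h : u.1 + 1 < v.1 ∨ v.1 + 1 < u.1) : pathLaplacian n w u v = 0 := by
  simp only [pathLaplacian, of_apply, Fin.ext_iff]
  split_ifs <;> first | rfl | omega

theorem pathLaplacian_mulVec {N : ℕ} (w : ℕ → ℝ) (x : Fin (N + 1) → ℝ) (i : Fin (N + 1)) :
    (pathLaplacian (N + 1) w *ᵥ x) i =
      (if h : i ≠ Fin.last N then w i.1 * (x i - x (i.castPred h).succ) else 0) -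
        (if h : i ≠ 0 then w (i.1 - 1) * (x (i.pred h).castSucc - x i) else 0) := by
  have hentry : ∀ j, pathLaplacian (N + 1) w i j =
      (if j = i then
        (if i ≠ Fin.last N then w i.1 else 0) + (if i ≠ 0 then w (i.1 - 1) else 0) else 0) -
      (if h : i ≠ Fin.last N then (if j = (i.castPred h).succ then w i.1 else 0) else 0) -
      (if h : i ≠ 0 then (if j = (i.pred h).castSucc then w (i.1 - 1) else 0) else 0) := by
    intro j
    simp only [pathLaplacian, of_apply, Fin.ext_iff, Fin.val_last, Fin.val_succ,
      Fin.coe_castPred, Fin.val_castSucc, Fin.val_pred, Fin.val_zero, ne_eq]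
    split_ifs <;> first | omega | (rw [show j.1 = i.1 - 1 by omega]; ring) | ring
  simp only [mulVec, dotProduct, hentry, sub_mul, ite_mul, zero_mul, dite_mul,
    Finset.sum_sub_distrib, Finset.sum_ite_eq', Finset.mem_univ, if_true,
    Finset.sum_dite_irrel, Finset.sum_const_zero]
  split_ifs <;> ring

theorem dotProduct_pathLaplacian_mulVec {N : ℕ} (w : ℕ → ℝ) (x : Fin (N + 1) → ℝ) :
    x ⬝ᵥ (pathLaplacian (N + 1) w *ᵥ x) = ∑ m : Fin N, w m * (x m.castSucc - x m.succ) ^ 2 := by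
  simp only [dotProduct, pathLaplacian_mulVec, mul_sub, Finset.sum_sub_distrib]
  rw [Fin.sum_univ_castSucc, Fin.sum_univ_succ (fun i => x i * _)]
  simp only [ne_eq, Fin.castSucc_ne_last, not_false_eq_true, ↓reduceDIte, Fin.val_castSucc,
    Fin.castPred_castSucc, not_true_eq_false, mul_zero, add_zero, Fin.succ_ne_zero, Fin.val_succ,
    add_tsub_cancel_right, Fin.pred_succ, zero_add, ← Finset.sum_sub_distrib]
  exact Fintype.sum_congr _ _ fun m => by ring

theorem dotProduct_pathLaplacian_mulVec_pos {n : ℕ} {w : ℕ → ℝ}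
    (hw : ∀ i, i + 1 < n → 0 < w i) {y : Fin n → ℝ} (hy : y ≠ 0) {v₀ : Fin n} (hv₀ : y v₀ = 0) :
    0 < y ⬝ᵥ (pathLaplacian n w *ᵥ y) := by
  obtain ⟨N, rfl⟩ : ∃ N, n = N + 1 := Nat.exists_eq_add_one.2 v₀.pos
  rw [dotProduct_pathLaplacian_mulVec]
  have hterm : ∀ m : Fin N, 0 ≤ w m * (y m.castSucc - y m.succ) ^ 2 := fun m =>
    mul_nonneg (hw m (by omega)).le (sq_nonneg _)
  refine (Finset.sum_nonneg fun m _ => hterm m).lt_of_ne fun hzero => hy ?_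
  have hstep : ∀ m : Fin N, y m.castSucc = y m.succ := fun m => by
    have := (Finset.sum_eq_zero_iff_of_nonneg fun m _ => hterm m).1 hzero.symm m
      (Finset.mem_univ _)
    have := (mul_eq_zero.1 this).resolve_left (hw m (by omega)).ne'
    linarith [pow_eq_zero_iff (n := 2) two_ne_zero |>.1 this]
  have hconst : ∀ i, y i = y 0 := Fin.induction rfl fun m ih => (hstep m).symm.trans ih
  funext i
  rw [hconst i, ← hconst v₀, hv₀, Pi.zero_apply]

abbrev principalSubmatrix {α R : Type*} (M : Matrix α α R) (P : α → Prop) :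
    Matrix {a // P a} {a // P a} R :=
  M.submatrix Subtype.val Subtype.val

theorem dotProduct_principalSubmatrix_mulVec {α R : Type*} [Fintype α] [CommRing R]
    (M : Matrix α α R) (P : α → Prop) [DecidablePred P] (x : {a // P a} → R) :
    x ⬝ᵥ (principalSubmatrix M P *ᵥ x) =
      (fun a => if h : P a then x ⟨a, h⟩ else 0) ⬝ᵥ
        (M *ᵥ fun a => if h : P a then x ⟨a, h⟩ else 0) := by
  have hsum : ∀ f : α → R,
      ∑ a, f a * (if h : P a then x ⟨a, h⟩ else 0) = ∑ a : {a // P a}, f a * x a := by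
    intro f
    rw [← Fintype.sum_subtype_add_sum_subtype P,
      Fintype.sum_eq_zero (α := {a // ¬ P a}) _ fun a => by simp [a.2], add_zero]
    exact Fintype.sum_congr _ _ fun a => by simp [a.2]
  rw [dotProduct_comm, dotProduct_comm _ (M *ᵥ _)]
  simp only [dotProduct, mulVec, hsum]
  rfl

theorem posDef_principalSubmatrix_pathLaplacian {n : ℕ} {w : ℕ → ℝ}
    (hw : ∀ i, i + 1 < n → 0 < w i) {P : Fin n → Prop} {v₀ : Fin n} (hv₀ : ¬ P v₀) :
    (principalSubmatrix (pathLaplacian n w) P).PosDef := by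
  classical
  refine .of_dotProduct_mulVec_pos
    ((isHermitian_iff_isSymm.2 (pathLaplacian_isSymm n w)).submatrix _) fun x hx => ?_
  rw [star_trivial, dotProduct_principalSubmatrix_mulVec]
  refine dotProduct_pathLaplacian_mulVec_pos hw (fun h => hx (funext fun a => ?_)) (dif_neg hv₀)
  simpa [a.2] using congrFun h a

theorem inv_blockDiagonal' {ι R : Type*} [Fintype ι] [DecidableEq ι] {m : ι → Type*}
    [∀ i, Fintype (m i)] [∀ i, DecidableEq (m i)] [CommRing R]
    (A : ∀ i, Matrix (m i) (m i) R) (hA : ∀ i, IsUnit (A i)) :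
    (blockDiagonal' A)⁻¹ = blockDiagonal' fun i => (A i)⁻¹ := by
  refine inv_eq_right_inv ?_
  rw [← blockDiagonal'_mul, ← blockDiagonal'_one]
  congr 1
  exact funext fun i => mul_nonsing_inv _ ((isUnit_iff_isUnit_det _).1 (hA i))

theorem trInv_congr {n : ℕ} {M : Matrix (Fin n) (Fin n) ℝ} {P Q : Fin n → Prop}
    (h : ∀ x, P x ↔ Q x) : trInv M P = trInv M Q :=
  congrArg (trInv M) (funext fun x => propext (h x))

theorem trInv_eq_trace_inv {n : ℕ} (M : Matrix (Fin n) (Fin n) ℝ) (P : Fin n → Prop)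
    [DecidablePred P] : trInv M P = trace (principalSubmatrix M P)⁻¹ := by
  unfold trInv
  congr!

theorem trInv_exists_eq_sum {n : ℕ} {ι : Type*} [Fintype ι] (M : Matrix (Fin n) (Fin n) ℝ)
    (P : ι → Fin n → Prop) [∀ i, DecidablePred (P i)]
    (hdisj : Pairwise fun i j => ∀ x, P i x → ¬ P j x)
    (hsep : Pairwise fun i j => ∀ u v, P i u → P j v → M u v = 0)
    (hunit : ∀ i, IsUnit (principalSubmatrix M (P i))) :
    trInv M (fun x => ∃ i, P i x) = ∑ i, trInv M (P i) := by
  classical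
  set U := principalSubmatrix M fun x => ∃ i, P i x
  let e : (Σ i, {x // P i x}) ≃ {x // ∃ i, P i x} :=
    Equiv.ofBijective (fun a => ⟨a.2, a.1, a.2.2⟩)
      ⟨fun a b hab => by
        have hval : a.2.1 = b.2.1 := congrArg Subtype.val hab
        have hfst : a.1 = b.1 := by
          by_contra hne
          exact hdisj hne _ a.2.2 (hval ▸ b.2.2)
        exact Sigma.subtype_ext hfst hval,
      fun x => ⟨⟨x.2.choose, x.1, x.2.choose_spec⟩, rfl⟩⟩
  have hblock : U.submatrix e e = blockDiagonal' fun i => principalSubmatrix M (P i) := by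
    ext ⟨i, a⟩ ⟨j, b⟩
    rcases eq_or_ne i j with rfl | hij
    · rw [submatrix_apply, blockDiagonal'_apply_eq]
      rfl
    · rw [submatrix_apply, blockDiagonal'_apply_ne _ _ _ hij]
      exact hsep hij _ _ a.2 b.2
  calc trInv M (fun x => ∃ i, P i x) = trace (U.submatrix e e)⁻¹ := by
        rw [trInv_eq_trace_inv, inv_submatrix_equiv]
        exact (e.sum_comp fun a => U⁻¹ a a).symm
    _ = ∑ i, trInv M (P i) := by
        simp only [hblock, inv_blockDiagonal' _ hunit, trace_blockDiagonal', trInv_eq_trace_inv]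

theorem zero_ne_last_of_pos {k : ℕ} (hk : 0 < k) : (0 : Fin (k + 1)) ≠ Fin.last k :=
  fun h => hk.ne (by simpa using congrArg Fin.val h)

theorem exists_inl_of_auxEdge {n : ℕ} {u v x : Fin n ⊕ Bool} (huv : auxEdge u v)
    (hvx : auxEdge v x) : ∃ a, v = .inl a := by
  rcases v with a | _ | _
  · exact ⟨a, rfl⟩
  · rcases u with _ | _ | _ <;> exact huv.elim
  · rcases x with _ | _ | _ <;> exact hvx.elim

section LeaderPath

variable {n k : ℕ} (ℓ : Fin k → Fin n)

theorem leaderPath_zero : leaderPath ℓ 0 = .inr false := rfl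

theorem leaderPath_last : leaderPath ℓ (Fin.last (k + 1)) = .inr true := by
  simp [leaderPath]

theorem leaderPath_castSucc_succ (j : Fin k) : leaderPath ℓ j.castSucc.succ = .inl (ℓ j) := by
  simp [leaderPath]

theorem leaderPath_castSucc_of_ne_zero {i : Fin (k + 1)} (h : i ≠ 0) :
    leaderPath ℓ i.castSucc = .inl (ℓ (i.pred h)) := by
  obtain ⟨j, rfl⟩ := Fin.exists_succ_eq.2 h
  rw [← Fin.succ_castSucc, leaderPath_castSucc_succ, Fin.pred_succ]

theorem leaderPath_succ_of_ne_last {i : Fin (k + 1)} (h : i ≠ Fin.last k) :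
    leaderPath ℓ i.succ = .inl (ℓ (i.castPred h)) := by
  obtain ⟨j, rfl⟩ := Fin.exists_castSucc_eq.2 h
  rw [leaderPath_castSucc_succ, Fin.castPred_castSucc]

theorem leaderPath_injective : Function.Injective (leaderPath : (Fin k → Fin n) → _) :=
  fun ℓ ℓ' h => funext fun j => Sum.inl_injective <| by
    rw [← leaderPath_castSucc_succ, ← leaderPath_castSucc_succ, h]

theorem forall_auxEdge_leaderPath_iff :
    (∀ i : Fin (k + 1), auxEdge (leaderPath ℓ i.castSucc) (leaderPath ℓ i.succ)) ↔
      0 < k ∧ StrictMono ℓ := by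
  constructor
  · intro h
    obtain ⟨K, rfl⟩ : ∃ K, k = K + 1 := by
      refine Nat.exists_eq_add_one.2 (Nat.pos_of_ne_zero fun hk => ?_)
      subst hk
      exact h 0
    refine ⟨K.succ_pos, Fin.strictMono_iff_lt_succ.2 fun j => ?_⟩
    have := h j.succ.castSucc
    rwa [show j.succ.castSucc.castSucc = j.castSucc.castSucc.succ from rfl,
      leaderPath_castSucc_succ, leaderPath_castSucc_succ] at this
  · rintro ⟨hk, hℓ⟩ i
    rcases eq_or_ne i 0 with rfl | h0
    · rw [Fin.castSucc_zero, leaderPath_zero,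
        leaderPath_succ_of_ne_last ℓ (zero_ne_last_of_pos hk)]
      trivial
    rcases eq_or_ne i (Fin.last k) with rfl | hl
    · rw [Fin.succ_last, leaderPath_last, leaderPath_castSucc_of_ne_zero ℓ h0]
      trivial
    rw [leaderPath_castSucc_of_ne_zero ℓ h0, leaderPath_succ_of_ne_last ℓ hl]
    exact hℓ (Fin.pred_lt_castPred h0 hl)

/-- The vertices strictly between vertices `i` and `i + 1` of `leaderPath ℓ`. -/
def leaderGap (i : Fin (k + 1)) (x : Fin n) : Prop :=
  (∀ h : i ≠ 0, ℓ (i.pred h) < x) ∧ ∀ h : i ≠ Fin.last k, x < ℓ (i.castPred h)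

theorem auxWeight_leaderPath (M : Matrix (Fin n) (Fin n) ℝ) (hk : 0 < k) (i : Fin (k + 1)) :
    auxWeight M (leaderPath ℓ i.castSucc) (leaderPath ℓ i.succ) = trInv M (leaderGap ℓ i) := by
  rcases eq_or_ne i 0 with rfl | h0
  · have hl := zero_ne_last_of_pos hk
    rw [Fin.castSucc_zero, leaderPath_zero, leaderPath_succ_of_ne_last ℓ hl]
    exact trInv_congr fun x => by simp [leaderGap, hl]
  rcases eq_or_ne i (Fin.last k) with rfl | hl
  · rw [Fin.succ_last, leaderPath_last, leaderPath_castSucc_of_ne_zero ℓ h0]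
    exact trInv_congr fun x => by simp [leaderGap, h0]
  rw [leaderPath_castSucc_of_ne_zero ℓ h0, leaderPath_succ_of_ne_last ℓ hl]
  exact trInv_congr fun x => by simp [leaderGap, h0, hl]

variable {ℓ}

theorem leaderGap.val_add_one_lt (hℓ : Monotone ℓ) {i j : Fin (k + 1)} (hij : i < j)
    {x y : Fin n} (hx : leaderGap ℓ i x) (hy : leaderGap ℓ j y) : x.1 + 1 < y.1 := by
  have hl : i ≠ Fin.last k := (hij.trans_le (Fin.le_last j)).ne
  have h0 : j ≠ 0 := (Fin.zero_le i |>.trans_lt hij).ne'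
  have h₁ := hx.2 hl
  have h₂ := (hℓ ((Fin.castPred_le_pred_iff hl h0).2 hij)).trans_lt (hy.1 h0)
  fin_omega

theorem leaderGap.notMem_range (hℓ : Monotone ℓ) {i : Fin (k + 1)} {x : Fin n}
    (hx : leaderGap ℓ i x) : x ∉ Set.range ℓ := by
  rintro ⟨j, rfl⟩
  rcases lt_or_ge j.castSucc i with h | h
  · have h0 : i ≠ 0 := (Fin.zero_le _ |>.trans_lt h).ne'
    exact (hx.1 h0).not_ge (hℓ ((Fin.le_pred_iff h0).2 (Fin.castSucc_lt_iff_succ_le.1 h)))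
  · have hl : i ≠ Fin.last k := (h.trans_lt (Fin.castSucc_lt_last j)).ne
    exact (hx.2 hl).not_ge (hℓ ((Fin.castPred_le_iff hl).2 h))

theorem exists_leaderGap_of_notMem_range (hℓ : StrictMono ℓ) {x : Fin n}
    (hx : x ∉ Set.range ℓ) : ∃ i, leaderGap ℓ i x := by
  classical
  -- `x` lies in the gap whose index is the number of leaders below `x`.
  set c := (Finset.univ.filter fun j => ℓ j < x).card
  have hc : c < k + 1 :=
    Nat.lt_succ_of_le ((Finset.card_filter_le _ _).trans_eq (Finset.card_fin k))
  refine ⟨⟨c, hc⟩, fun h0 => ?_, fun hl => ?_⟩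
  · set j := Fin.pred ⟨c, hc⟩ h0
    by_contra! hle
    have hlt : x < ℓ j := hle.lt_of_ne fun h => hx ⟨j, h.symm⟩
    have : c ≤ j := (Fin.card_Iio j).symm ▸ Finset.card_le_card fun j' hj' =>
      Finset.mem_Iio.2 (hℓ.lt_iff_lt.1 ((Finset.mem_filter.1 hj').2.trans hlt))
    have : j.1 = c - 1 := Fin.val_pred _ h0
    have : c ≠ 0 := fun h => h0 (Fin.ext h)
    omega
  · set j := Fin.castPred ⟨c, hc⟩ hl
    by_contra! hle
    have hlt : ℓ j < x := hle.lt_of_ne fun h => hx ⟨j, h⟩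
    have : j.1 + 1 ≤ c := (Fin.card_Iic j).symm ▸ Finset.card_le_card fun j' hj' =>
      Finset.mem_filter.2 ⟨Finset.mem_univ _, (hℓ.monotone (Finset.mem_Iic.1 hj')).trans_lt hlt⟩
    have : j.1 = c := Fin.coe_castPred _ hl
    omega

theorem notMem_range_iff_exists_leaderGap (hℓ : StrictMono ℓ) (x : Fin n) :
    x ∉ Set.range ℓ ↔ ∃ i, leaderGap ℓ i x :=
  ⟨exists_leaderGap_of_notMem_range hℓ, fun ⟨_, hx⟩ => hx.notMem_range hℓ.monotone⟩

theorem sum_auxWeight_leaderPath {w : ℕ → ℝ} (hw : ∀ i, i + 1 < n → 0 < w i) (hk : 0 < k)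
    (hℓ : StrictMono ℓ) :
    ∑ i : Fin (k + 1),
        auxWeight (pathLaplacian n w) (leaderPath ℓ i.castSucc) (leaderPath ℓ i.succ) =
      trInv (pathLaplacian n w) (· ∉ Set.range ℓ) := by
  classical
  have hapart : Pairwise fun i j => ∀ x y, leaderGap ℓ i x → leaderGap ℓ j y →
      x.1 + 1 < y.1 ∨ y.1 + 1 < x.1 := fun i j hij x y hx hy =>
    hij.lt_or_gt.imp (leaderGap.val_add_one_lt hℓ.monotone · hx hy)
      (leaderGap.val_add_one_lt hℓ.monotone · hy hx)
  rw [trInv_congr (notMem_range_iff_exists_leaderGap hℓ), trInv_exists_eq_sum]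
  · exact Fintype.sum_congr _ _ (auxWeight_leaderPath ℓ _ hk)
  · exact fun i j hij x hx hx' => by have := hapart hij x x hx hx'; omega
  · exact fun i j hij u v hu hv => pathLaplacian_apply_eq_zero_s9 w (hapart hij u v hu hv)
  · exact fun i => (posDef_principalSubmatrix_pathLaplacian hw (v₀ := ℓ ⟨0, hk⟩)
      fun h => h.notMem_range hℓ.monotone ⟨_, rfl⟩).isUnit

theorem exists_eq_leaderPath {p : Fin (k + 2) → Fin n ⊕ Bool} (h0 : p 0 = .inr false)
    (hlast : p (Fin.last (k + 1)) = .inr true)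
    (hedge : ∀ i : Fin (k + 1), auxEdge (p i.castSucc) (p i.succ)) :
    ∃ ℓ : Fin k → Fin n, p = leaderPath ℓ := by
  have hinl : ∀ j : Fin k, ∃ v, p j.castSucc.succ = .inl v := fun j =>
    exists_inl_of_auxEdge (hedge j.castSucc) (Fin.succ_castSucc j ▸ hedge j.succ)
  choose ℓ hℓ using hinl
  refine ⟨ℓ, funext fun i => ?_⟩
  induction i using Fin.cases with
  | zero => rw [h0, leaderPath_zero]
  | succ i =>
    induction i using Fin.lastCases with
    | last => rw [Fin.succ_last, hlast, leaderPath_last]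
    | cast j => rw [hℓ j, leaderPath_castSucc_succ]

end LeaderPath

/-- Leader sets of size exactly `k` (given by `ℓ 0 < ⋯ < ℓ (k-1)`) are in
bijection with directed `s`–`t` paths of exactly `k+1` edges in the auxiliary
digraph, via `ℓ ↦ (s, ℓ 0, …, ℓ (k-1), t)`, and the weight of the path equals
twice the total steady-state variance `R({ℓ 0, …, ℓ (k-1)})`. -/
theorem path_leaderSets_biject_paths {n k : ℕ} (w : ℕ → ℝ)
    (hw : ∀ i, i + 1 < n → 0 < w i) (hk : 0 < k) :
    (∀ ℓ : Fin k → Fin n, StrictMono ℓ →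
      (∀ i : Fin (k + 1),
          auxEdge (leaderPath ℓ i.castSucc) (leaderPath ℓ i.succ)) ∧
      (∑ i : Fin (k + 1),
          auxWeight (pathLaplacian n w) (leaderPath ℓ i.castSucc) (leaderPath ℓ i.succ))
        = 2 * ((1 / 2 : ℝ) *
            trInv (pathLaplacian n w) (fun v => v ∉ Finset.image ℓ Finset.univ))) ∧
    (∀ p : Fin (k + 2) → Fin n ⊕ Bool,
      p 0 = Sum.inr false → p (Fin.last (k + 1)) = Sum.inr true →
      (∀ i : Fin (k + 1), auxEdge (p i.castSucc) (p i.succ)) →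
      ∃! ℓ : Fin k → Fin n, StrictMono ℓ ∧ p = leaderPath ℓ) := by
  refine ⟨fun ℓ hℓ => ⟨(forall_auxEdge_leaderPath_iff ℓ).2 ⟨hk, hℓ⟩, ?_⟩,
    fun p h0 hlast hedge => ?_⟩
  · rw [sum_auxWeight_leaderPath hw hk hℓ, ← mul_assoc, mul_one_div_cancel two_ne_zero, one_mul]
    exact trInv_congr fun x => by simp
  · obtain ⟨ℓ, rfl⟩ := exists_eq_leaderPath h0 hlast hedge
    exact ⟨ℓ, ⟨((forall_auxEdge_leaderPath_iff ℓ).1 hedge).2, rfl⟩,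
      fun ℓ' h => leaderPath_injective h.2.symm⟩
end

section
/- Minimizing R(S) over nonempty leader sets S of size at most k in a path graph is equivalent to finding a minimum-weight directed path from s to t with at most k+1 edges in the auxiliary digraph Ḡ: the minimum of 2R(S) over |S| ≤ k, S ≠ ∅, equals the minimum weight over s–t paths in Ḡ with at most k+1 edges. -/
namespace PathAux
open Finset Matrix

variable {n : ℕ} {w : ℕ → ℝ}

/-- extension of `Y : Fin n → ℝ` to `ℕ` by zero -/
noncomputable def Yx (Y : Fin n → ℝ) : ℕ → ℝ := fun i => if h : i < n then Y ⟨i, h⟩ else 0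

lemma sum_val_eq (m : ℕ) (f : Fin n → ℝ) :
    (∑ b : Fin n, if b.1 = m then f b else 0) = if h : m < n then f ⟨m, h⟩ else 0 := by
  by_cases h : m < n
  · rw [dif_pos h, Finset.sum_eq_single (⟨m, h⟩ : Fin n)]
    · simp
    · intro b _ hb
      rw [if_neg]
      intro hbm
      exact hb (Fin.ext hbm)
    · simp
  · rw [dif_neg h, Finset.sum_eq_zero]
    intro b _
    rw [if_neg]
    intro hbm
    exact h (hbm ▸ b.2)

lemma shift_sum (G : ℕ → ℝ) :
    ∑ a ∈ range n, (if a = 0 then 0 else G (a - 1))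
      = ∑ i ∈ range n, (if i + 1 < n then G i else 0) := by
  cases n with
  | zero => simp
  | succ m =>
    rw [Finset.sum_range_succ' (fun a => if a = 0 then 0 else G (a - 1)) m,
      Finset.sum_range_succ (fun i => if i + 1 < m + 1 then G i else 0) m]
    rw [if_pos rfl, if_neg (by omega : ¬ m + 1 < m + 1)]
    rw [add_zero, add_zero]
    refine Finset.sum_congr rfl fun i hi => ?_
    rw [Finset.mem_range] at hi
    rw [if_neg (by omega : ¬ i + 1 = 0), if_pos (by omega : i + 1 < m + 1)]
    simp

/-- the quadratic form summand -/
noncomputable def qf (n : ℕ) (w : ℕ → ℝ) (A : ℕ → ℝ) (i : ℕ) : ℝ :=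
  A i * (((if i + 1 < n then w i else 0) + (if i = 0 then 0 else w (i - 1))) * A i
    - (if i + 1 < n then w i * A (i + 1) else 0)
    - (if i = 0 then 0 else w (i - 1) * A (i - 1)))

lemma mulVec_eq (Y : Fin n → ℝ) (a : Fin n) :
    (pathLaplacian n w).mulVec Y a
      = ((if a.1 + 1 < n then w a.1 else 0) + (if a.1 = 0 then 0 else w (a.1 - 1))) * Yx Y a.1
        - (if a.1 + 1 < n then w a.1 * Yx Y (a.1 + 1) else 0)
        - (if a.1 = 0 then 0 else w (a.1 - 1) * Yx Y (a.1 - 1)) := by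
  classical
  set dg : ℝ := (if a.1 + 1 < n then w a.1 else 0) + (if a.1 = 0 then 0 else w (a.1 - 1)) with hdg
  have hsummand : ∀ b : Fin n, pathLaplacian n w a b * Y b
      = (if b.1 = a.1 then dg * Y b else 0) + (if b.1 = a.1 + 1 then -(w a.1) * Y b else 0)
        + (if (¬ a.1 = 0) ∧ b.1 = a.1 - 1 then -(w (a.1 - 1)) * Y b else 0) := by
    intro b
    simp only [pathLaplacian, Matrix.of_apply, hdg]
    rcases eq_or_ne a b with rfl | hab
    · rw [if_pos rfl, if_pos rfl, if_neg (by omega : ¬ (a.1 = a.1 + 1)),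
        if_neg (by omega : ¬ ((¬ a.1 = 0) ∧ a.1 = a.1 - 1))]
      ring
    · have hab' : ¬ (a.1 = b.1) := fun h => hab (Fin.ext h)
      rw [if_neg hab, if_neg (fun h : b.1 = a.1 => hab' h.symm)]
      by_cases hb1 : b.1 = a.1 + 1
      · rw [if_pos hb1, if_pos hb1,
          if_neg (by omega : ¬ ((¬ a.1 = 0) ∧ b.1 = a.1 - 1))]
        ring
      · rw [if_neg hb1, if_neg hb1]
        by_cases hb2 : a.1 = b.1 + 1
        · rw [if_pos hb2, if_pos (by omega : (¬ a.1 = 0) ∧ b.1 = a.1 - 1),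
            (by omega : a.1 - 1 = b.1)]
          ring
        · rw [if_neg hb2, if_neg (by omega : ¬ ((¬ a.1 = 0) ∧ b.1 = a.1 - 1))]
          ring
  rw [Matrix.mulVec, dotProduct,
    Finset.sum_congr rfl fun b _ => hsummand b, Finset.sum_add_distrib,
    Finset.sum_add_distrib, sum_val_eq, sum_val_eq]
  have hterm3 : (∑ b : Fin n, (if (¬ a.1 = 0) ∧ b.1 = a.1 - 1 then -(w (a.1 - 1)) * Y b else 0))
      = if a.1 = 0 then 0 else -(w (a.1 - 1)) * Yx Y (a.1 - 1) := by
    by_cases ha0 : a.1 = 0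
    · rw [if_pos ha0, Finset.sum_eq_zero fun b _ => if_neg (by tauto)]
    · rw [if_neg ha0]
      have heq : ∀ b : Fin n, (if (¬ a.1 = 0) ∧ b.1 = a.1 - 1 then -(w (a.1 - 1)) * Y b else 0)
          = (if b.1 = a.1 - 1 then -(w (a.1 - 1)) * Y b else 0) := fun b => by
        by_cases h : b.1 = a.1 - 1
        · rw [if_pos ⟨ha0, h⟩, if_pos h]
        · rw [if_neg (fun hc => h hc.2), if_neg h]
      rw [Finset.sum_congr rfl fun b _ => heq b, sum_val_eq,
        dif_pos (by omega : a.1 - 1 < n)]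
      simp only [Yx]
      rw [dif_pos (by omega : a.1 - 1 < n)]
  rw [hterm3, dif_pos a.2, Fin.eta]
  simp only [Yx]
  rw [dif_pos a.2, Fin.eta]
  split_ifs <;> ring

lemma quadForm (Y : Fin n → ℝ) :
    Y ⬝ᵥ (pathLaplacian n w).mulVec Y
      = ∑ i ∈ range n, (if i + 1 < n then w i * (Yx Y i - Yx Y (i + 1)) ^ 2 else 0) := by
  classical
  rw [dotProduct]
  have key : ∀ a : Fin n, Y a * (pathLaplacian n w).mulVec Y a = qf n w (Yx Y) a.1 := by
    intro a
    rw [mulVec_eq]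
    simp only [qf]
    have : Yx Y a.1 = Y a := by simp [Yx]
    rw [this]
  rw [Finset.sum_congr rfl fun a _ => key a, Fin.sum_univ_eq_sum_range (qf n w (Yx Y)) n]
  set A := Yx Y with hA
  have expand : ∀ i ∈ range n, qf n w A i
      = ((if i + 1 < n then w i * A i ^ 2 else 0)
          + (if i = 0 then 0 else w (i - 1) * A i ^ 2))
        - (if i + 1 < n then w i * A i * A (i + 1) else 0)
        - (if i = 0 then 0 else w (i - 1) * A (i - 1) * A i) := by
    intro i _
    simp only [qf]
    split_ifs <;> ring
  rw [Finset.sum_congr rfl expand]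
  simp only [Finset.sum_sub_distrib, Finset.sum_add_distrib]
  rw [show (∑ i ∈ range n, if i = 0 then 0 else w (i - 1) * A i ^ 2)
        = ∑ i ∈ range n, (if i = 0 then 0 else (fun j => w j * A (j + 1) ^ 2) (i - 1)) from
      Finset.sum_congr rfl fun i hi => by
        by_cases h : i = 0
        · rw [if_pos h, if_pos h]
        · rw [if_neg h, if_neg h]; simp only []; rw [(by omega : i - 1 + 1 = i)],
    shift_sum (fun j => w j * A (j + 1) ^ 2)]
  rw [show (∑ i ∈ range n, if i = 0 then 0 else w (i - 1) * A (i - 1) * A i)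
        = ∑ i ∈ range n, (if i = 0 then 0 else (fun j => w j * A j * A (j + 1)) (i - 1)) from
      Finset.sum_congr rfl fun i hi => by
        by_cases h : i = 0
        · rw [if_pos h, if_pos h]
        · rw [if_neg h, if_neg h]; simp only []; rw [(by omega : i - 1 + 1 = i)],
    shift_sum (fun j => w j * A j * A (j + 1))]
  rw [← Finset.sum_add_distrib, ← Finset.sum_sub_distrib, ← Finset.sum_sub_distrib]
  refine Finset.sum_congr rfl fun i _ => ?_
  split_ifs <;> ring

end PathAux

namespace PathAux2
open Finset Matrix PathAux

variable {n : ℕ} {w : ℕ → ℝ}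

lemma sum_dite_subtype (P : Fin n → Prop) [DecidablePred P] (f : {v : Fin n // P v} → ℝ) :
    (∑ b : Fin n, if h : P b then f ⟨b, h⟩ else 0) = ∑ b : {v : Fin n // P v}, f b := by
  rw [← Finset.sum_filter_add_sum_filter_not Finset.univ P]
  have h2 : ∑ b ∈ Finset.univ.filter (fun b => ¬ P b), (if h : P b then f ⟨b, h⟩ else 0) = 0 :=
    Finset.sum_eq_zero fun b hb => dif_neg (Finset.mem_filter.mp hb).2
  rw [h2, add_zero,
    Finset.sum_subtype (p := P) (Finset.univ.filter P) (fun x => by simp)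
      (fun b => if h : P b then f ⟨b, h⟩ else 0)]
  refine Finset.sum_congr rfl fun b _ => ?_
  rw [dif_pos b.2]

lemma submatrix_invertible (hw : ∀ i, i + 1 < n → 0 < w i) (P : Fin n → Prop)
    [DecidablePred P] (x0 : Fin n) (hx0 : ¬ P x0) :
    IsUnit ((pathLaplacian n w).submatrix (fun a : {v : Fin n // P v} => (a : Fin n))
        (fun a : {v : Fin n // P v} => (a : Fin n))).det := by
  classical
  by_contra hdet
  rw [isUnit_iff_ne_zero, not_ne_iff] at hdet
  obtain ⟨z, hz, hmv⟩ := Matrix.exists_mulVec_eq_zero_iff.mpr hdet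
  set Y : Fin n → ℝ := fun x => if h : P x then z ⟨x, h⟩ else 0 with hY
  have hrow : ∀ x : Fin n, P x → (pathLaplacian n w).mulVec Y x = 0 := by
    intro x hx
    have heq : (pathLaplacian n w).mulVec Y x
        = ((pathLaplacian n w).submatrix (fun a : {v : Fin n // P v} => (a : Fin n))
            (fun a : {v : Fin n // P v} => (a : Fin n))).mulVec z ⟨x, hx⟩ := by
      rw [Matrix.mulVec, dotProduct, Matrix.mulVec, dotProduct]
      simp only [Matrix.submatrix_apply]
      rw [← sum_dite_subtype P (fun b => pathLaplacian n w x (b : Fin n) * z b)]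
      refine Finset.sum_congr rfl fun b _ => ?_
      by_cases hb : P b
      · rw [dif_pos hb, hY]; simp [dif_pos hb]
      · rw [dif_neg hb, hY]; simp [dif_neg hb]
    rw [heq, hmv]
    rfl
  have hquad : Y ⬝ᵥ (pathLaplacian n w).mulVec Y = 0 := by
    rw [dotProduct]
    refine Finset.sum_eq_zero fun x _ => ?_
    by_cases hx : P x
    · rw [hrow x hx, mul_zero]
    · have : Y x = 0 := dif_neg hx
      rw [this, zero_mul]
  rw [quadForm] at hquad
  have hterm : ∀ i ∈ range n, (if i + 1 < n then w i * (Yx Y i - Yx Y (i + 1)) ^ 2 else 0) = 0 := by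
    refine (Finset.sum_eq_zero_iff_of_nonneg ?_).mp hquad
    intro i _
    split_ifs with h
    · have := (hw i h).le
      positivity
    · exact le_refl _
  have hconsec : ∀ i, i + 1 < n → Yx Y i = Yx Y (i + 1) := by
    intro i h
    have h2 := hterm i (Finset.mem_range.mpr (by omega))
    rw [if_pos h] at h2
    have hwi := hw i h
    have hd : (Yx Y i - Yx Y (i + 1)) ^ 2 = 0 := by
      rcases mul_eq_zero.mp h2 with h' | h'
      · exact absurd h' (ne_of_gt hwi)
      · exact h'
    have := pow_eq_zero_iff (n := 2) (by norm_num) |>.mp hd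
    linarith
  have hchain : ∀ j i, i ≤ j → j < n → Yx Y i = Yx Y j := by
    intro j
    induction j with
    | zero => intro i hij _; cases Nat.le_zero.mp hij; rfl
    | succ m ih =>
      intro i hij hmn
      by_cases hieq : i = m + 1
      · rw [hieq]
      · exact (ih i (by omega) (by omega)).trans (hconsec m (by omega))
  have hconst : ∀ i, i < n → Yx Y i = Yx Y x0.1 := by
    intro i hi
    rcases le_total i x0.1 with h | h
    · exact hchain x0.1 i h x0.2
    · exact (hchain i x0.1 h hi).symm
  apply hz
  funext b
  have hb := hconst b.1.1 b.1.2
  have hx0v : Yx Y x0.1 = 0 := by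
    simp only [Yx, dif_pos x0.2, Fin.eta, hY]
    rw [dif_neg hx0]
  have hbv : Yx Y b.1.1 = z b := by
    simp only [Yx, dif_pos b.1.2, Fin.eta, hY]
    rw [dif_pos b.2]
  rw [← hbv, hb, hx0v]
  rfl

end PathAux2

namespace PathAux3
open Finset Matrix PathAux PathAux2

variable {n : ℕ} {w : ℕ → ℝ}

noncomputable def trInv' {n : ℕ} (L : Matrix (Fin n) (Fin n) ℝ) (P : Fin n → Prop) : ℝ :=
  haveI : DecidablePred P := fun v => Classical.propDecidable _
  Matrix.trace
    ((L.submatrix (fun a : {v : Fin n // P v} => (a : Fin n))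
        (fun a : {v : Fin n // P v} => (a : Fin n)))⁻¹)

lemma trInv'_congr {L : Matrix (Fin n) (Fin n) ℝ} {P Q : Fin n → Prop} (h : ∀ x, P x ↔ Q x) :
    trInv' L P = trInv' L Q := by
  have hPQ : P = Q := funext fun x => propext (h x)
  rw [hPQ]

lemma trInv'_eq (L : Matrix (Fin n) (Fin n) ℝ) (P : Fin n → Prop) [DecidablePred P] :
    trInv' L P = Matrix.trace
      ((L.submatrix (fun a : {v : Fin n // P v} => (a : Fin n))
          (fun a : {v : Fin n // P v} => (a : Fin n)))⁻¹) := by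
  rw [trInv']
  congr!

lemma trace_submatrix_equiv' {m' : Type*} [Fintype m'] [DecidableEq m']
    {k : Type*} [Fintype k] [DecidableEq k] (e : k ≃ m') (M : Matrix m' m' ℝ) :
    Matrix.trace (M.submatrix e e) = Matrix.trace M := by
  simp only [Matrix.trace, Matrix.diag, Matrix.submatrix_apply]
  exact Equiv.sum_comp e fun j => M j j

lemma trInv'_union {L : Matrix (Fin n) (Fin n) ℝ} (P Q : Fin n → Prop)
    [DecidablePred P] [DecidablePred Q]
    (hdisj : ∀ x, ¬ (P x ∧ Q x))
    (hsep : ∀ x y : Fin n, P x → Q y → L x y = 0 ∧ L y x = 0)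
    (hP : IsUnit (L.submatrix (fun a : {v : Fin n // P v} => (a : Fin n))
        (fun a : {v : Fin n // P v} => (a : Fin n))).det)
    (hQ : IsUnit (L.submatrix (fun a : {v : Fin n // Q v} => (a : Fin n))
        (fun a : {v : Fin n // Q v} => (a : Fin n))).det) :
    trInv' L (fun x => P x ∨ Q x) = trInv' L P + trInv' L Q := by
  classical
  set A := L.submatrix (fun a : {v : Fin n // P v} => (a : Fin n))
      (fun a : {v : Fin n // P v} => (a : Fin n)) with hA
  set B := L.submatrix (fun a : {v : Fin n // Q v} => (a : Fin n))
      (fun a : {v : Fin n // Q v} => (a : Fin n)) with hB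
  set M := L.submatrix (fun a : {v : Fin n // P v ∨ Q v} => (a : Fin n))
      (fun a : {v : Fin n // P v ∨ Q v} => (a : Fin n)) with hM
  let e : ({v : Fin n // P v} ⊕ {v : Fin n // Q v}) ≃ {v : Fin n // P v ∨ Q v} :=
    { toFun := Sum.elim (fun a => ⟨a.1, Or.inl a.2⟩) (fun a => ⟨a.1, Or.inr a.2⟩)
      invFun := fun x => if h : P x.1 then Sum.inl ⟨x.1, h⟩ else Sum.inr ⟨x.1, x.2.resolve_left h⟩
      left_inv := by
        rintro (a | a)
        · simp [a.2]
        · simp [dif_neg (fun h => hdisj a.1 ⟨h, a.2⟩)]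
      right_inv := by
        rintro ⟨x, hx⟩
        by_cases h : P x
        · simp [dif_pos h]
        · simp [dif_neg h] }
  have hblock : M.submatrix e e = Matrix.fromBlocks A 0 0 B := by
    ext ab cd
    rcases ab with a | a <;> rcases cd with b | b
    · simp [hM, hA, e, Matrix.submatrix_apply]
    · simpa [hM, e, Matrix.submatrix_apply] using (hsep a.1 b.1 a.2 b.2).1
    · simpa [hM, e, Matrix.submatrix_apply] using (hsep b.1 a.1 b.2 a.2).2
    · simp [hM, hB, e, Matrix.submatrix_apply]
  have h1 : M.submatrix e e * (Matrix.fromBlocks A⁻¹ 0 0 B⁻¹) = 1 := by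
    rw [hblock, Matrix.fromBlocks_multiply]
    simp only [Matrix.mul_nonsing_inv A hP, Matrix.mul_nonsing_inv B hQ, Matrix.zero_mul,
      Matrix.mul_zero, add_zero, zero_add, Matrix.mul_one]
    rw [← Matrix.fromBlocks_one]
  have h2 : (M.submatrix e e)⁻¹ = Matrix.fromBlocks A⁻¹ 0 0 B⁻¹ := Matrix.inv_eq_right_inv h1
  have h3 : Matrix.trace M⁻¹ = Matrix.trace A⁻¹ + Matrix.trace B⁻¹ := by
    have h4 : Matrix.trace ((M.submatrix e e)⁻¹) = Matrix.trace M⁻¹ := by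
      rw [Matrix.inv_submatrix_equiv M e e, trace_submatrix_equiv']
    rw [← h4, h2]
    simp [Matrix.trace, Matrix.diag, Fintype.sum_sum_type]
  rw [trInv'_eq L (fun x => P x ∨ Q x), trInv'_eq L P, trInv'_eq L Q]
  exact h3

end PathAux3

namespace PathAux4
open Finset Matrix PathAux PathAux2 PathAux3

variable {n : ℕ} {w : ℕ → ℝ}

lemma L_far {x y : Fin n} (h : x.1 + 1 < y.1) :
    pathLaplacian n w x y = 0 ∧ pathLaplacian n w y x = 0 := by
  constructor
  · simp only [pathLaplacian, Matrix.of_apply]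
    rw [if_neg (fun he => by rw [he] at h; omega), if_neg (by omega), if_neg (by omega)]
  · simp only [pathLaplacian, Matrix.of_apply]
    rw [if_neg (fun he => by rw [he] at h; omega), if_neg (by omega), if_neg (by omega)]

lemma decomp (hw : ∀ i, i + 1 < n → 0 < w i) :
    ∀ m (v : ℕ → Fin n) (hi : ℕ), 0 < m → (∀ i j, i < j → j < m → v i < v j) →
      (v (m - 1)).1 < hi →
      trInv' (pathLaplacian n w) (fun x => (∀ i, i < m → x ≠ v i) ∧ x.1 < hi)
        = trInv' (pathLaplacian n w) (fun x => x < v 0)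
          + (∑ i ∈ Finset.range (m - 1),
              trInv' (pathLaplacian n w) (fun x => v i < x ∧ x < v (i + 1)))
          + trInv' (pathLaplacian n w) (fun x => v (m - 1) < x ∧ x.1 < hi) := by
  intro m
  induction m with
  | zero => intro v hi h0; omega
  | succ m ih =>
    intro v hi _ hmono htop
    simp only [Nat.add_sub_cancel] at htop ⊢
    classical
    by_cases hm : m = 0
    · subst hm
      have hu : trInv' (pathLaplacian n w) (fun x => x < v 0 ∨ (v 0 < x ∧ x.1 < hi))
          = trInv' (pathLaplacian n w) (fun x => x < v 0)
            + trInv' (pathLaplacian n w) (fun x => v 0 < x ∧ x.1 < hi) :=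
        trInv'_union (L := pathLaplacian n w)
          (fun x => x < v 0) (fun x => v 0 < x ∧ x.1 < hi)
          (fun x hc => absurd (lt_trans hc.1 hc.2.1) (lt_irrefl x))
          (fun x y hx hy => L_far (by
            have h1 : x < v 0 := hx
            have h2 : v 0 < y := hy.1
            rw [Fin.lt_def] at h1 h2
            omega))
          (submatrix_invertible hw _ (v 0) (lt_irrefl (v 0)))
          (submatrix_invertible hw _ (v 0) (fun hc => absurd hc.1 (lt_irrefl (v 0))))
      rw [Finset.range_zero, Finset.sum_empty, add_zero, ← hu]
      refine trInv'_congr fun x => ?_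
      constructor
      · rintro ⟨hne, hxhi⟩
        rcases lt_or_gt_of_ne (hne 0 (by omega)) with h | h
        · exact Or.inl h
        · exact Or.inr ⟨h, hxhi⟩
      · rintro (h | ⟨h, hxhi⟩)
        · exact ⟨fun i hi1 => by interval_cases i; exact ne_of_lt h,
            by rw [Fin.lt_def] at h; omega⟩
        · exact ⟨fun i hi1 => by interval_cases i; exact ne_of_gt h, hxhi⟩
    · -- step case, m ≥ 1
      have hvm_lt : ∀ i, i < m → v i < v m := fun i h => hmono i m h (by omega)
      have hu : trInv' (pathLaplacian n w)
            (fun x => ((∀ i, i < m → x ≠ v i) ∧ x.1 < (v m).1) ∨ (v m < x ∧ x.1 < hi))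
          = trInv' (pathLaplacian n w) (fun x => (∀ i, i < m → x ≠ v i) ∧ x.1 < (v m).1)
            + trInv' (pathLaplacian n w) (fun x => v m < x ∧ x.1 < hi) :=
        trInv'_union (L := pathLaplacian n w)
          (fun x => (∀ i, i < m → x ≠ v i) ∧ x.1 < (v m).1)
          (fun x => v m < x ∧ x.1 < hi)
          (fun x hc => by
            have h1 : x.1 < (v m).1 := hc.1.2
            have h2 : v m < x := hc.2.1
            rw [Fin.lt_def] at h2
            omega)
          (fun x y hx hy => L_far (by
            have h1 : x.1 < (v m).1 := hx.2
            have h2 : v m < y := hy.1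
            rw [Fin.lt_def] at h2
            omega))
          (submatrix_invertible hw _ (v m) (fun hc => by
            have := hc.2
            omega))
          (submatrix_invertible hw _ (v m) (fun hc => absurd hc.1 (lt_irrefl (v m))))
      have hequiv : ∀ x : Fin n, ((∀ i, i < m + 1 → x ≠ v i) ∧ x.1 < hi)
          ↔ (((∀ i, i < m → x ≠ v i) ∧ x.1 < (v m).1) ∨ (v m < x ∧ x.1 < hi)) := by
        intro x
        constructor
        · rintro ⟨hne, hxhi⟩
          rcases lt_or_gt_of_ne (hne m (by omega)) with h | h
          · exact Or.inl ⟨fun i hi1 => hne i (by omega), by rw [Fin.lt_def] at h; exact h⟩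
          · exact Or.inr ⟨h, hxhi⟩
        · rintro (⟨hne, hxm⟩ | ⟨h, hxhi⟩)
          · refine ⟨fun i hi1 => ?_, by omega⟩
            by_cases him : i = m
            · subst him; exact fun he => by rw [he] at hxm; omega
            · exact hne i (by omega)
          · refine ⟨fun i hi1 => ?_, hxhi⟩
            have hlt : v i ≤ v m := by
              by_cases him : i = m
              · rw [him]
              · exact le_of_lt (hvm_lt i (by omega))
            exact ne_of_gt (lt_of_le_of_lt hlt h)
      rw [trInv'_congr hequiv, hu]
      have hih := ih v (v m).1 (by omega) (fun i j hij hj => hmono i j hij (by omega))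
        (by rw [← Fin.lt_def]; exact hmono (m - 1) m (by omega) (by omega))
      rw [hih]
      have hlast : trInv' (pathLaplacian n w) (fun x => v (m - 1) < x ∧ x.1 < (v m).1)
          = trInv' (pathLaplacian n w) (fun x => v (m - 1) < x ∧ x < v m) :=
        trInv'_congr fun x => by
          constructor
          · rintro ⟨h1, h2⟩; exact ⟨h1, by rw [Fin.lt_def]; exact h2⟩
          · rintro ⟨h1, h2⟩; exact ⟨h1, by rw [Fin.lt_def] at h2; exact h2⟩
      have hsum : (∑ i ∈ Finset.range m,
            trInv' (pathLaplacian n w) (fun x => v i < x ∧ x < v (i + 1)))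
          = (∑ i ∈ Finset.range (m - 1),
              trInv' (pathLaplacian n w) (fun x => v i < x ∧ x < v (i + 1)))
            + trInv' (pathLaplacian n w) (fun x => v (m - 1) < x ∧ x < v (m - 1 + 1)) := by
        conv_lhs => rw [show m = (m - 1) + 1 from by omega]
        rw [Finset.sum_range_succ]
      rw [hsum, show m - 1 + 1 = m from by omega, hlast]
      ring

lemma decompTop (hw : ∀ i, i + 1 < n → 0 < w i) (m : ℕ) (v : ℕ → Fin n) (hm : 0 < m)
    (hmono : ∀ i j, i < j → j < m → v i < v j) :
    trInv' (pathLaplacian n w) (fun x => ∀ i, i < m → x ≠ v i)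
      = trInv' (pathLaplacian n w) (fun x => x < v 0)
        + (∑ i ∈ Finset.range (m - 1),
            trInv' (pathLaplacian n w) (fun x => v i < x ∧ x < v (i + 1)))
        + trInv' (pathLaplacian n w) (fun x => v (m - 1) < x) := by
  have h1 := decomp hw m v n hm hmono (v (m - 1)).2
  rw [trInv'_congr (P := fun x => ∀ i, i < m → x ≠ v i)
      (Q := fun x => (∀ i, i < m → x ≠ v i) ∧ x.1 < n) (fun x => by simp [x.2]),
    h1, trInv'_congr (P := fun x => v (m - 1) < x ∧ x.1 < n)
      (Q := fun x => v (m - 1) < x) (fun x => by simp [x.2])]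

end PathAux4

namespace PathAux5
open Finset Matrix PathAux PathAux2 PathAux3 PathAux4

noncomputable def auxWeight' {n : ℕ} (L : Matrix (Fin n) (Fin n) ℝ) :
    (Fin n ⊕ Bool) → (Fin n ⊕ Bool) → ℝ
  | Sum.inr false, Sum.inl v => trInv' L (fun x => x < v)
  | Sum.inl u, Sum.inl v => trInv' L (fun x => u < x ∧ x < v)
  | Sum.inl v, Sum.inr true => trInv' L (fun x => v < x)
  | _, _ => 0

variable {n : ℕ} {w : ℕ → ℝ}

lemma strictMono_of_local {M : ℕ} {v : ℕ → Fin n} (h : ∀ i, i + 1 < M → v i < v (i + 1)) :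
    ∀ i j, i < j → j < M → v i < v j := by
  intro i j hij hj
  induction j with
  | zero => omega
  | succ m ih =>
    by_cases him : i = m
    · subst him; exact h i (by omega)
    · exact lt_trans (ih (by omega) (by omega)) (h m (by omega))

lemma pathSum (L : Matrix (Fin n) (Fin n) ℝ) (m : ℕ) (hm : 0 < m) (v : ℕ → Fin n)
    (p : ℕ → Fin n ⊕ Bool)
    (hp0 : p 0 = Sum.inr false) (hpi : ∀ i, i < m → p (i + 1) = Sum.inl (v i))
    (hpl : p (m + 1) = Sum.inr true) :
    ∑ i ∈ Finset.range (m + 1), auxWeight' L (p i) (p (i + 1))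
      = trInv' L (fun x => x < v 0)
        + (∑ i ∈ Finset.range (m - 1), trInv' L (fun x => v i < x ∧ x < v (i + 1)))
        + trInv' L (fun x => v (m - 1) < x) := by
  rw [Finset.sum_range_succ' (fun i => auxWeight' L (p i) (p (i + 1))) m]
  have hf0 : auxWeight' L (p 0) (p 1) = trInv' L (fun x => x < v 0) := by
    rw [hp0, show (1 : ℕ) = 0 + 1 from rfl, hpi 0 hm]
    rfl
  have hsplit : (∑ i ∈ Finset.range m, auxWeight' L (p (i + 1)) (p (i + 1 + 1)))
      = (∑ i ∈ Finset.range (m - 1), auxWeight' L (p (i + 1)) (p (i + 1 + 1)))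
        + auxWeight' L (p (m - 1 + 1)) (p (m - 1 + 1 + 1)) := by
    conv_lhs => rw [show m = (m - 1) + 1 from by omega]
    rw [Finset.sum_range_succ]
  rw [hsplit]
  have hmid : ∀ i ∈ Finset.range (m - 1), auxWeight' L (p (i + 1)) (p (i + 1 + 1))
      = trInv' L (fun x => v i < x ∧ x < v (i + 1)) := by
    intro i hi
    rw [Finset.mem_range] at hi
    rw [hpi i (by omega), hpi (i + 1) (by omega)]
    rfl
  have hlastv : auxWeight' L (p (m - 1 + 1)) (p (m - 1 + 1 + 1))
      = trInv' L (fun x => v (m - 1) < x) := by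
    rw [hpi (m - 1) (by omega), show m - 1 + 1 + 1 = m + 1 from by omega, hpl]
    rfl
  rw [Finset.sum_congr rfl hmid, hlastv, hf0]
  ring

end PathAux5


open PathAux3 PathAux4 PathAux5

/-- Minimizing `R(S)` over nonempty leader sets of size at most `k` in a path
graph is equivalent to finding a minimum-weight directed `s`–`t` path of at most
`k+1` edges in the auxiliary digraph: the minimum of `2R(S)` equals the minimum
path weight. -/
theorem path_leader_selection_eq_min_path {n k : ℕ} (w : ℕ → ℝ)
    (hw : ∀ i, i + 1 < n → 0 < w i) (hn : 0 < n) (hk : 0 < k) :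
    sInf {x : ℝ | ∃ S : Finset (Fin n), S.Nonempty ∧ S.card ≤ k ∧
        x = 2 * ((1 / 2 : ℝ) * trInv (pathLaplacian n w) (fun v => v ∉ S))}
      = sInf {x : ℝ | ∃ m, m ≤ k + 1 ∧ ∃ p : ℕ → Fin n ⊕ Bool,
          p 0 = Sum.inr false ∧ p m = Sum.inr true ∧
          (∀ i < m, auxEdge (p i) (p (i + 1))) ∧
          (∀ i j, i ≤ m → j ≤ m → p i = p j → i = j) ∧
          x = ∑ i ∈ Finset.range m, auxWeight (pathLaplacian n w) (p i) (p (i + 1))} := by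
  classical
  have hW : ∀ (a b : Fin n ⊕ Bool),
      auxWeight (pathLaplacian n w) a b = auxWeight' (pathLaplacian n w) a b := by
    rintro (u | (_|_)) (v | (_|_)) <;> rfl
  have hT : ∀ P : Fin n → Prop,
      trInv (pathLaplacian n w) P = trInv' (pathLaplacian n w) P := fun _ => rfl
  congr 1
  ext x
  simp only [Set.mem_setOf_eq]
  constructor
  · rintro ⟨S, hne, hcard, rfl⟩
    have hSpos : 0 < S.card := Finset.card_pos.mpr hne
    set iso := S.orderIsoOfFin rfl with hiso
    set v : ℕ → Fin n := fun i => if h : i < S.card then (iso ⟨i, h⟩ : Fin n) else ⟨0, hn⟩ with hv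
    have hvlt : ∀ i (h : i < S.card), v i = (iso ⟨i, h⟩ : Fin n) := by
      intro i h
      rw [hv]
      simp only [dif_pos h]
    have hmono : ∀ i j, i < j → j < S.card → v i < v j := by
      intro i j hij hj
      rw [hvlt i (by omega), hvlt j hj]
      exact Subtype.coe_lt_coe.mpr (iso.lt_iff_lt.mpr (Fin.mk_lt_mk.mpr hij))
    have hmem : ∀ y : Fin n, y ∈ S ↔ ∃ i, i < S.card ∧ y = v i := by
      intro y
      constructor
      · intro hy
        refine ⟨(iso.symm ⟨y, hy⟩).1, (iso.symm ⟨y, hy⟩).2, ?_⟩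
        rw [hvlt _ (iso.symm ⟨y, hy⟩).2, Fin.eta, iso.apply_symm_apply]
      · rintro ⟨i, hi, rfl⟩
        rw [hvlt i hi]
        exact (iso ⟨i, hi⟩).2
    set p : ℕ → Fin n ⊕ Bool := fun i =>
      if i = 0 then Sum.inr false
      else if i ≤ S.card then Sum.inl (v (i - 1)) else Sum.inr true with hp
    have hp0 : p 0 = Sum.inr false := rfl
    have hpi : ∀ i, i < S.card → p (i + 1) = Sum.inl (v i) := by
      intro i hi
      rw [hp]
      simp only [if_neg (by omega : ¬ i + 1 = 0), if_pos (by omega : i + 1 ≤ S.card),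
        Nat.add_sub_cancel]
    have hpl : p (S.card + 1) = Sum.inr true := by
      rw [hp]
      simp only [if_neg (by omega : ¬ S.card + 1 = 0),
        if_neg (by omega : ¬ S.card + 1 ≤ S.card)]
    refine ⟨S.card + 1, by omega, p, hp0, hpl, ?_, ?_, ?_⟩
    · intro i hi
      by_cases hi0 : i = 0
      · subst hi0
        rw [hp0, show (0 : ℕ) + 1 = 0 + 1 from rfl, hpi 0 hSpos]
        trivial
      · by_cases him : i = S.card
        · subst him
          have h1 : p S.card = Sum.inl (v (S.card - 1)) := by
            conv_lhs => rw [show S.card = (S.card - 1) + 1 from by omega]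
            rw [hpi (S.card - 1) (by omega)]
          rw [h1, hpl]
          trivial
        · have h1 : p i = Sum.inl (v (i - 1)) := by
            conv_lhs => rw [show i = (i - 1) + 1 from by omega]
            rw [hpi (i - 1) (by omega)]
          have h2 : p (i + 1) = Sum.inl (v i) := hpi i (by omega)
          rw [h1, h2]
          show v (i - 1) < v i
          exact hmono (i - 1) i (by omega) (by omega)
    · intro i j hi hj hpp
      rw [hp] at hpp
      simp only [] at hpp
      split_ifs at hpp <;>
        first
        | omega
        | (exfalso; simpa using hpp)
        | (have hinl : v (i - 1) = v (j - 1) := by simpa using hpp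
           rcases lt_trichotomy (i - 1) (j - 1) with h | h | h
           · exact absurd hinl (ne_of_lt (hmono _ _ h (by omega)))
           · omega
           · exact absurd hinl.symm (ne_of_lt (hmono _ _ h (by omega))))
    · rw [Finset.sum_congr rfl (fun i _ => hW (p i) (p (i + 1))),
        pathSum (pathLaplacian n w) S.card hSpos v p hp0 hpi hpl, hT]
      have hco : trInv' (pathLaplacian n w) (fun y : Fin n => y ∉ S)
          = trInv' (pathLaplacian n w) (fun y => ∀ i, i < S.card → y ≠ v i) :=
        trInv'_congr fun y => by
          rw [hmem y]
          push_neg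
          exact Iff.rfl
      rw [hco, decompTop hw S.card v hSpos hmono]
      ring
  · rintro ⟨m, hm, p, h0, hmt, hedge, hinj, rfl⟩
    have hm0 : m ≠ 0 := by
      intro h
      subst h
      rw [h0] at hmt
      simp at hmt
    have hm1 : m ≠ 1 := by
      intro h
      subst h
      have he := hedge 0 (by omega)
      rw [h0, hmt] at he
      simp [auxEdge] at he
    set mb := m - 1 with hmb
    have hmb1 : 0 < mb := by omega
    have hin : ∀ i, i < mb → ∃ u, p (i + 1) = Sum.inl u := by
      intro i hi
      cases hu : p (i + 1) with
      | inl u => exact ⟨u, rfl⟩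
      | inr b =>
        cases b
        · exact absurd (hinj (i + 1) 0 (by omega) (by omega) (by rw [hu, h0])) (by omega)
        · exact absurd (hinj (i + 1) m (by omega) (by omega) (by rw [hu, hmt])) (by omega)
    set v : ℕ → Fin n := fun i => Sum.elim id (fun _ => (⟨0, hn⟩ : Fin n)) (p (i + 1)) with hv
    have hpi : ∀ i, i < mb → p (i + 1) = Sum.inl (v i) := by
      intro i hi
      obtain ⟨u, hu⟩ := hin i hi
      rw [hv]
      simp only [hu, Sum.elim_inl, id]
    have hlocal : ∀ i, i + 1 < mb → v i < v (i + 1) := by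
      intro i hi
      have he := hedge (i + 1) (by omega)
      rw [hpi i (by omega), show i + 1 + 1 = (i + 1) + 1 from rfl, hpi (i + 1) (by omega)] at he
      exact he
    have hmono : ∀ i j, i < j → j < mb → v i < v j := strictMono_of_local hlocal
    set S : Finset (Fin n) := (Finset.range mb).image v with hS
    have hmemS : ∀ y : Fin n, y ∈ S ↔ ∃ i, i < mb ∧ v i = y := by
      intro y
      rw [hS, Finset.mem_image]
      simp only [Finset.mem_range]
    refine ⟨S, ?_, ?_, ?_⟩
    · exact ⟨v 0, (hmemS (v 0)).mpr ⟨0, hmb1, rfl⟩⟩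
    · exact le_trans Finset.card_image_le (by simp; omega)
    · have hsum : ∑ i ∈ Finset.range m, auxWeight (pathLaplacian n w) (p i) (p (i + 1))
          = ∑ i ∈ Finset.range (mb + 1), auxWeight' (pathLaplacian n w) (p i) (p (i + 1)) := by
        rw [show mb + 1 = m from by omega]
        exact Finset.sum_congr rfl fun i _ => hW (p i) (p (i + 1))
      rw [hsum, pathSum (pathLaplacian n w) mb hmb1 v p h0 hpi
        (by rw [show mb + 1 = m from by omega]; exact hmt), hT]
      have hco : trInv' (pathLaplacian n w) (fun y : Fin n => y ∉ S)
          = trInv' (pathLaplacian n w) (fun y => ∀ i, i < mb → y ≠ v i) :=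
        trInv'_congr fun y => by
          rw [hmemS y]
          push_neg
          constructor
          · intro h i hi
            exact fun he => (h i hi) he.symm
          · intro h i hi
            exact fun he => (h i hi) he.symm
      rw [hco, decompTop hw mb v hmb1 hmono]
      ring
end

section
/- For the unweighted path on m+2 vertices grounded at both endpoints, the inverse of the grounded Laplacian M has diagonal entries (M^{-1})_{ii} = i(m+1−i)/(m+1), and hence tr(M^{-1}) = Σ_{i=1}^m i(m+1−i)/(m+1) = m(m+2)/6. -/
/-- The Dirichlet Laplacian of a segment of `m` followers between two leaders in
an unweighted path: the `m×m` tridiagonal matrix with diagonal `2` and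
off-diagonal `−1`. -/
def dirichletPath (m : ℕ) : Matrix (Fin m) (Fin m) ℝ :=
  Matrix.of fun i j =>
    if i = j then 2
    else if j.1 = i.1 + 1 ∨ i.1 = j.1 + 1 then -1 else 0

/-- Green's function of the Dirichlet path. -/
noncomputable def pathGreen (m : ℕ) (a b : ℤ) : ℝ :=
  ((min a b + 1 : ℤ) : ℝ) * ((m : ℝ) - ((max a b : ℤ) : ℝ)) / (m + 1)

noncomputable def pathGreenMat (m : ℕ) : Matrix (Fin m) (Fin m) ℝ :=
  Matrix.of fun i j => pathGreen m i.1 j.1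

lemma pathGreen_key (m : ℕ) (i j : Fin m) :
    2 * pathGreen m i.1 j.1 - pathGreen m (i.1 + 1) j.1 - pathGreen m (i.1 - 1) j.1
      = if i = j then 1 else 0 := by
  have hi := i.2
  have hj := j.2
  have hm1 : (m : ℝ) + 1 ≠ 0 := by positivity
  rcases lt_trichotomy (i.1 : ℤ) (j.1 : ℤ) with h | h | h
  · have e1 : min (i.1 : ℤ) j.1 = i.1 := by omega
    have e2 : max (i.1 : ℤ) j.1 = j.1 := by omega
    have e3 : min ((i.1 : ℤ) + 1) j.1 = (i.1 : ℤ) + 1 := by omega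
    have e4 : max ((i.1 : ℤ) + 1) j.1 = j.1 := by omega
    have e5 : min ((i.1 : ℤ) - 1) j.1 = (i.1 : ℤ) - 1 := by omega
    have e6 : max ((i.1 : ℤ) - 1) j.1 = j.1 := by omega
    have hne : i ≠ j := by intro he; rw [he] at h; omega
    rw [if_neg hne]
    simp only [pathGreen, e1, e2, e3, e4, e5, e6]
    push_cast
    field_simp
    ring
  · have he : i = j := by
      apply Fin.ext; omega
    rw [if_pos he]
    subst he
    have e1 : min (i.1 : ℤ) i.1 = i.1 := by omega
    have e2 : max (i.1 : ℤ) i.1 = i.1 := by omega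
    have e3 : min ((i.1 : ℤ) + 1) i.1 = (i.1 : ℤ) := by omega
    have e4 : max ((i.1 : ℤ) + 1) i.1 = (i.1 : ℤ) + 1 := by omega
    have e5 : min ((i.1 : ℤ) - 1) i.1 = (i.1 : ℤ) - 1 := by omega
    have e6 : max ((i.1 : ℤ) - 1) i.1 = (i.1 : ℤ) := by omega
    simp only [pathGreen, e1, e2, e3, e4, e5, e6]
    push_cast
    field_simp
    ring
  · have e1 : min (i.1 : ℤ) j.1 = j.1 := by omega
    have e2 : max (i.1 : ℤ) j.1 = i.1 := by omega
    have e3 : min ((i.1 : ℤ) + 1) j.1 = (j.1 : ℤ) := by omega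
    have e4 : max ((i.1 : ℤ) + 1) j.1 = (i.1 : ℤ) + 1 := by omega
    have e5 : min ((i.1 : ℤ) - 1) j.1 = (j.1 : ℤ) := by omega
    have e6 : max ((i.1 : ℤ) - 1) j.1 = (i.1 : ℤ) - 1 := by omega
    have hne : i ≠ j := by intro he; rw [he] at h; omega
    rw [if_neg hne]
    simp only [pathGreen, e1, e2, e3, e4, e5, e6]
    push_cast
    field_simp
    ring

lemma dirichletPath_mul_green (m : ℕ) : dirichletPath m * pathGreenMat m = 1 := by
  ext i j
  rw [Matrix.mul_apply]
  have hsplit : ∀ k : Fin m, dirichletPath m i k * pathGreenMat m k j =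
      (if k = i then 2 * pathGreenMat m k j else 0) +
      ((if k.1 = i.1 + 1 then -(pathGreenMat m k j) else 0) +
       (if i.1 = k.1 + 1 then -(pathGreenMat m k j) else 0)) := by
    intro k
    simp only [dirichletPath, Matrix.of_apply, Fin.ext_iff]
    split_ifs <;> first | ring1 | (exfalso; omega)
  rw [Finset.sum_congr rfl fun k _ => hsplit k, Finset.sum_add_distrib,
    Finset.sum_add_distrib]
  have S1 : (∑ k : Fin m, if k = i then 2 * pathGreenMat m k j else 0)
      = 2 * pathGreen m i.1 j.1 := by
    rw [Finset.sum_ite_eq' Finset.univ i]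
    simp [pathGreenMat]
  have S2 : (∑ k : Fin m, if k.1 = i.1 + 1 then -(pathGreenMat m k j) else 0)
      = -(pathGreen m (i.1 + 1) j.1) := by
    by_cases h : i.1 + 1 < m
    · have hc : ∀ k : Fin m, (k.1 = i.1 + 1) = (k = (⟨i.1 + 1, h⟩ : Fin m)) := by
        intro k; simp [Fin.ext_iff]
      simp_rw [hc]
      rw [Finset.sum_ite_eq' Finset.univ]
      simp [pathGreenMat]
    · have him : i.1 + 1 = m := by omega
      have hz : ∀ k : Fin m, ¬ (k.1 = i.1 + 1) := by intro k; omega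
      simp only [hz, if_false, Finset.sum_const_zero]
      have hmax : max ((i.1 : ℤ) + 1) (j.1 : ℤ) = (m : ℤ) := by
        have := j.2; omega
      simp only [pathGreen, hmax]
      push_cast
      ring
  have S3 : (∑ k : Fin m, if i.1 = k.1 + 1 then -(pathGreenMat m k j) else 0)
      = -(pathGreen m (i.1 - 1) j.1) := by
    by_cases h : 0 < i.1
    · have hlt : i.1 - 1 < m := by omega
      have hc : ∀ k : Fin m, (i.1 = k.1 + 1) = (k = (⟨i.1 - 1, hlt⟩ : Fin m)) := by
        intro k; simp only [Fin.ext_iff]; simp only [eq_iff_iff]; omega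
      simp_rw [hc]
      rw [Finset.sum_ite_eq' Finset.univ]
      simp only [Finset.mem_univ, if_pos, pathGreenMat, Matrix.of_apply]
      have : ((i.1 - 1 : ℕ) : ℤ) = (i.1 : ℤ) - 1 := by omega
      rw [this]
    · have hz : ∀ k : Fin m, ¬ (i.1 = k.1 + 1) := by intro k; omega
      simp only [hz, if_false, Finset.sum_const_zero]
      have hi0 : (i.1 : ℤ) = 0 := by omega
      have hmin : min ((i.1 : ℤ) - 1) (j.1 : ℤ) = -1 := by omega
      simp only [pathGreen, hmin]
      push_cast
      ring
  rw [S1, S2, S3]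
  have := pathGreen_key m i j
  rw [Matrix.one_apply]
  linarith [pathGreen_key m i j]

lemma gauss_sum (n : ℕ) : ∑ i : Fin n, ((i.1 : ℝ) + 1) = n * (n + 1) / 2 := by
  induction n with
  | zero => simp
  | succ k ihk =>
    rw [Fin.sum_univ_castSucc]
    simp only [Fin.coe_castSucc, Fin.val_last]
    rw [ihk]
    push_cast
    ring

lemma sum_green_diag (m : ℕ) :
    ∑ i : Fin m, (((i.1 : ℝ) + 1) * ((m : ℝ) - (i.1 : ℝ))) = m * (m + 1) * (m + 2) / 6 := by
  induction m with
  | zero => simp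
  | succ n ih =>
    rw [Fin.sum_univ_castSucc]
    have hsum : ∑ i : Fin n, (((i.1 : ℝ) + 1) * (((n : ℝ) + 1) - (i.1 : ℝ)))
        = (∑ i : Fin n, (((i.1 : ℝ) + 1) * ((n : ℝ) - (i.1 : ℝ))))
          + (∑ i : Fin n, ((i.1 : ℝ) + 1)) := by
      rw [← Finset.sum_add_distrib]
      apply Finset.sum_congr rfl
      intro i _
      ring
    simp only [Fin.coe_castSucc, Fin.val_last]
    push_cast
    rw [hsum, ih, gauss_sum]
    ring

/-- The Dirichlet path Laplacian `M` is invertible, its inverse has diagonal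
entries `(M⁻¹)_{ii} = i(m+1−i)/(m+1)` (1-indexed), and
`tr(M⁻¹) = Σ_{i=1}^m i(m+1−i)/(m+1) = m(m+2)/6`. -/
theorem trace_inv_dirichletPath (m : ℕ) :
    IsUnit (dirichletPath m).det ∧
    (∀ i : Fin m, (dirichletPath m)⁻¹ i i = ((i.1 + 1) * (m - i.1) : ℝ) / (m + 1)) ∧
    Matrix.trace (dirichletPath m)⁻¹ = (m * (m + 2) : ℝ) / 6 := by
  have hmul := dirichletPath_mul_green m
  have hdet : IsUnit (dirichletPath m).det :=
    Matrix.isUnit_det_of_right_inverse hmul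
  have hinv : (dirichletPath m)⁻¹ = pathGreenMat m := Matrix.inv_eq_right_inv hmul
  have hdiag : ∀ i : Fin m, (dirichletPath m)⁻¹ i i = ((i.1 + 1) * (m - i.1) : ℝ) / (m + 1) := by
    intro i
    rw [hinv]
    simp only [pathGreenMat, Matrix.of_apply, pathGreen, min_self, max_self]
    push_cast
    ring
  refine ⟨hdet, hdiag, ?_⟩
  have hm1 : (m : ℝ) + 1 ≠ 0 := by positivity
  rw [Matrix.trace]
  have : ∑ i : Fin m, (dirichletPath m)⁻¹.diag i
      = ∑ i : Fin m, (((i.1 : ℝ) + 1) * ((m : ℝ) - (i.1 : ℝ))) / (m + 1) := by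
    apply Finset.sum_congr rfl
    intro i _
    rw [Matrix.diag]
    exact hdiag i
  rw [this, ← Finset.sum_div, sum_green_diag]
  field_simp
end
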